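/- arXiv:2011.10980 — 9 statements merged into one kernel-verified Lean document; each statement's English description precedes it below -/
import Mathlib

section
/- For every positive integer n, the sum over all a in (ℤ/nℤ)* of gcd(a-1, n) equals φ(n)·σ₀(n), where φ is Euler's totient and σ₀(n) is the number of divisors of n. -/
open Finset

private lemma menon_ker_card (n d : ℕ) [NeZero n] (h : d ∣ n) :
    d.totient * Nat.card ((ZMod.unitsMap h).ker) = n.totient := by
  have hd : NeZero d := ⟨fun h0 => (NeZero.ne n) (eq_zero_of_zero_dvd (h0 ▸ h))⟩
  have h1 := Subgroup.card_eq_card_quotient_mul_card_subgroup (ZMod.unitsMap h).ker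
  have h2 : Nat.card ((ZMod n)ˣ ⧸ (ZMod.unitsMap h).ker) = Nat.card (ZMod d)ˣ := by
    rw [Nat.card_congr (QuotientGroup.quotientKerEquivOfSurjective _
      (ZMod.unitsMap_surjective h)).toEquiv]
  rw [h2] at h1
  rw [Nat.card_eq_fintype_card, ZMod.card_units_eq_totient] at h1
  rw [Nat.card_eq_fintype_card, ZMod.card_units_eq_totient] at h1
  exact h1.symm

private lemma menon_count (n d : ℕ) (hn : 1 < n) (h : d ∣ n) :
    ((Finset.Icc 1 n).filter (fun a => Nat.gcd a n = 1 ∧ d ∣ a - 1)).card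
      = Nat.card ((ZMod.unitsMap h).ker) := by
  have hnz : NeZero n := ⟨by omega⟩
  rw [Nat.card_eq_fintype_card, Fintype.card_subtype]
  apply Finset.card_bij (fun a ha => ZMod.unitOfCoprime a (by
      simp only [Finset.mem_filter] at ha; exact ha.2.1))
  · -- maps to
    rintro a ha
    simp only [Finset.mem_filter, Finset.mem_Icc] at ha
    obtain ⟨⟨ha1, han⟩, hcop, hdvd⟩ := ha
    simp only [Finset.mem_filter, Finset.mem_univ, true_and, MonoidHom.mem_ker]
    apply Units.ext
    simp only [ZMod.unitsMap_def, Units.coe_map, ZMod.coe_unitOfCoprime,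
      MonoidHom.coe_coe, Units.val_one]
    rw [ZMod.castHom_apply, ZMod.cast_natCast h]
    have : (a : ZMod d) = ((1 : ℕ) : ZMod d) := by
      rw [ZMod.natCast_eq_natCast_iff]
      exact ((Nat.modEq_iff_dvd' ha1).mpr hdvd).symm
    simpa using this
  · -- injective
    rintro a ha b hb hab
    simp only [Finset.mem_filter, Finset.mem_Icc] at ha hb
    have : (a : ZMod n) = (b : ZMod n) := by
      have := congrArg Units.val hab
      simpa [ZMod.coe_unitOfCoprime] using this
    rw [ZMod.natCast_eq_natCast_iff] at this
    have ha' : a < n := by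
      rcases lt_or_eq_of_le ha.1.2 with h' | h'
      · exact h'
      · exfalso; have := ha.2.1; rw [h', Nat.gcd_self] at this; omega
    have hb' : b < n := by
      rcases lt_or_eq_of_le hb.1.2 with h' | h'
      · exact h'
      · exfalso; have := hb.2.1; rw [h', Nat.gcd_self] at this; omega
    exact Nat.ModEq.eq_of_lt_of_lt this ha' hb'
  · -- surjective
    rintro u hu
    simp only [Finset.mem_filter, Finset.mem_univ, true_and, MonoidHom.mem_ker] at hu
    have hcop : Nat.Coprime ((u : ZMod n).val) n := ZMod.val_coe_unit_coprime u
    have hvpos : 0 < (u : ZMod n).val := by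
      rcases Nat.eq_zero_or_pos (u : ZMod n).val with h' | h'
      · exfalso; rw [h', Nat.coprime_zero_left] at hcop; omega
      · exact h'
    have hmem : (u : ZMod n).val ∈ (Finset.Icc 1 n).filter
        (fun a => Nat.gcd a n = 1 ∧ d ∣ a - 1) := by
      simp only [Finset.mem_filter, Finset.mem_Icc]
      refine ⟨⟨hvpos, le_of_lt ((ZMod.val_lt _))⟩, hcop, ?_⟩
      have h1 : ((u : ZMod n).val : ZMod d) = ((1:ℕ) : ZMod d) := by
        have h2 : ((ZMod.unitsMap h u : ZMod d)) = 1 := by rw [hu]; rfl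
        simp only [ZMod.unitsMap_def, Units.coe_map, MonoidHom.coe_coe,
          ZMod.castHom_apply] at h2
        rw [← ZMod.natCast_val] at h2
        · simpa using h2
      rw [ZMod.natCast_eq_natCast_iff] at h1
      exact (Nat.modEq_iff_dvd' hvpos).mp h1.symm
    refine ⟨(u : ZMod n).val, hmem, ?_⟩
    apply Units.ext
    simp [ZMod.coe_unitOfCoprime, ZMod.natCast_val, ZMod.cast_id]

/-- Menon's identity: for every positive integer `n`,
`∑_{a ∈ (ℤ/nℤ)*} gcd(a-1, n) = φ(n) · σ₀(n)`. -/
theorem menon_identity (n : ℕ) (hn : 0 < n) :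
    ∑ a ∈ (Finset.Icc 1 n).filter (fun a => Nat.gcd a n = 1), Nat.gcd (a - 1) n
      = n.totient * n.divisors.card := by
  rcases eq_or_lt_of_le (show 1 ≤ n from hn) with h1 | h1
  · -- n = 1
    rw [← h1]; decide
  have hnz : NeZero n := ⟨by omega⟩
  have key : ∀ d ∈ n.divisors,
      d.totient * ((Finset.Icc 1 n).filter (fun a => Nat.gcd a n = 1 ∧ d ∣ a - 1)).card
        = n.totient := by
    intro d hd
    rw [Nat.mem_divisors] at hd
    rw [menon_count n d h1 hd.1, menon_ker_card n d hd.1]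
  have step1 : ∀ a, Nat.gcd (a-1) n = ∑ e ∈ n.divisors.filter (· ∣ a - 1), e.totient := by
    intro a
    conv_lhs => rw [← Nat.sum_totient (Nat.gcd (a-1) n)]
    congr 1
    ext e
    simp only [Nat.mem_divisors, Finset.mem_filter, Nat.dvd_gcd_iff]
    constructor
    · rintro ⟨⟨hx1, hx2⟩, -⟩; exact ⟨⟨hx2, by omega⟩, hx1⟩
    · rintro ⟨⟨hx2, -⟩, hx1⟩; exact ⟨⟨hx1, hx2⟩, (Nat.gcd_pos_of_pos_right _ hn).ne'⟩
  calc ∑ a ∈ (Finset.Icc 1 n).filter (fun a => Nat.gcd a n = 1), Nat.gcd (a - 1) n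
      = ∑ a ∈ (Finset.Icc 1 n).filter (fun a => Nat.gcd a n = 1),
          ∑ e ∈ n.divisors.filter (· ∣ a - 1), e.totient :=
        Finset.sum_congr rfl fun a _ => step1 a
    _ = ∑ a ∈ (Finset.Icc 1 n).filter (fun a => Nat.gcd a n = 1),
          ∑ e ∈ n.divisors, if e ∣ a - 1 then e.totient else 0 := by
        refine Finset.sum_congr rfl fun a _ => ?_
        rw [Finset.sum_filter]
    _ = ∑ e ∈ n.divisors, ∑ a ∈ (Finset.Icc 1 n).filter (fun a => Nat.gcd a n = 1),
          if e ∣ a - 1 then e.totient else 0 := Finset.sum_comm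
    _ = ∑ e ∈ n.divisors, e.totient *
          ((Finset.Icc 1 n).filter (fun a => Nat.gcd a n = 1 ∧ e ∣ a - 1)).card := by
        refine Finset.sum_congr rfl fun e _ => ?_
        rw [← Finset.sum_filter, Finset.filter_filter, Finset.sum_const, smul_eq_mul, mul_comm]
    _ = ∑ e ∈ n.divisors, n.totient := Finset.sum_congr rfl key
    _ = n.totient * n.divisors.card := by rw [Finset.sum_const, smul_eq_mul, mul_comm]
end

section
/- For every positive integer n and every non-negative integer s, ∑ gcd(a-1, b₁, …, b_s, n) = φ(n)·σ_s(n), where the sum ranges over 1 ≤ a, b₁, …, b_s ≤ n with gcd(a,n) = 1, and σ_s(n) = ∑_{d∣n} d^s. -/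
open Finset

/-- Count of `a ∈ [1,n]` coprime to `n` with `a ≡ 1 (mod d)`, for `d ∣ n`, `n > 1`. -/
lemma sury_count_aux (n : ℕ) (hn : 1 < n) (d : ℕ) (hd : d ∣ n) :
    ((Finset.Icc 1 n).filter (fun a => Nat.gcd a n = 1 ∧ d ∣ a - 1)).card * d.totient
      = n.totient := by
  haveI hn' : NeZero n := ⟨by omega⟩
  have hd0 : d ≠ 0 := by rintro rfl; have := Nat.eq_zero_of_zero_dvd hd; omega
  haveI : NeZero d := ⟨hd0⟩
  set K := (ZMod.unitsMap hd).ker with hK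
  have hker_iff : ∀ u : (ZMod n)ˣ, u ∈ K ↔ (ZMod.cast ((u : ZMod n)) : ZMod d) = 1 := by
    intro u
    rw [MonoidHom.mem_ker, Units.ext_iff, ZMod.unitsMap_def]
    simp
  have hmod : ∀ a : ℕ, 1 ≤ a → (d ∣ a - 1 ↔ ((a : ℕ) : ZMod d) = 1) := by
    intro a ha
    rw [show (1 : ZMod d) = ((1 : ℕ) : ZMod d) by simp, ZMod.natCast_eq_natCast_iff]
    constructor
    · intro h; exact ((Nat.modEq_iff_dvd' ha).mpr h).symm
    · intro h; exact (Nat.modEq_iff_dvd' ha).mp h.symm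
  -- Finset card of the filter equals the card of the kernel
  have hcard : ((Finset.Icc 1 n).filter (fun a => Nat.gcd a n = 1 ∧ d ∣ a - 1)).card
      = (Finset.univ.filter (fun u : (ZMod n)ˣ => u ∈ K)).card := by
    refine Finset.card_bij'
      (fun a ha => ZMod.unitOfCoprime a (by
        simp only [Finset.mem_filter] at ha; exact ha.2.1))
      (fun u hu => ((u : ZMod n)).val) ?_ ?_ ?_ ?_
    · intro a ha
      simp only [Finset.mem_filter, Finset.mem_Icc] at ha
      obtain ⟨⟨ha1, han⟩, hcop, hdvd⟩ := ha
      simp only [Finset.mem_filter, Finset.mem_univ, true_and]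
      rw [hker_iff, ZMod.coe_unitOfCoprime, ZMod.cast_natCast hd]
      exact (hmod a ha1).mp hdvd
    · intro u hu
      simp only [Finset.mem_filter, Finset.mem_univ, true_and] at hu
      have hcop : Nat.Coprime ((u : ZMod n)).val n := ZMod.val_coe_unit_coprime u
      have hvlt : ((u : ZMod n)).val < n := ZMod.val_lt _
      have hv1 : 1 ≤ ((u : ZMod n)).val := by
        rcases Nat.eq_zero_or_pos ((u : ZMod n)).val with h0 | h
        · exfalso
          rw [h0] at hcop
          simp [Nat.Coprime] at hcop
          omega
        · exact h
      simp only [Finset.mem_filter, Finset.mem_Icc]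
      refine ⟨⟨hv1, hvlt.le⟩, hcop, ?_⟩
      rw [hker_iff] at hu
      rw [hmod _ hv1, ZMod.natCast_val, hu]
    · intro a ha
      simp only [Finset.mem_filter, Finset.mem_Icc] at ha
      obtain ⟨⟨ha1, han⟩, hcop, hdvd⟩ := ha
      have halt : a < n := by
        rcases Nat.lt_or_ge a n with h | h
        · exact h
        · exfalso
          have : a = n := le_antisymm han h
          subst this
          simp [Nat.gcd_self] at hcop
          omega
      simp [ZMod.coe_unitOfCoprime, ZMod.val_cast_of_lt halt]
    · intro u hu
      ext
      simp only [ZMod.coe_unitOfCoprime]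
      exact ZMod.natCast_rightInverse (u : ZMod n)
  rw [hcard]
  -- group theory: card of kernel times totient d = totient n
  have h1 : Nat.card ((ZMod n)ˣ) = Nat.card ((ZMod n)ˣ ⧸ K) * Nat.card K :=
    Subgroup.card_eq_card_quotient_mul_card_subgroup K
  have h2 : Nat.card ((ZMod n)ˣ ⧸ K) = Nat.card ((ZMod d)ˣ) :=
    Nat.card_congr (QuotientGroup.quotientKerEquivOfSurjective _
      (ZMod.unitsMap_surjective hd)).toEquiv
  have h3 : Nat.card ((ZMod n)ˣ) = n.totient := by
    rw [Nat.card_eq_fintype_card, ZMod.card_units_eq_totient]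
  have h4 : Nat.card ((ZMod d)ˣ) = d.totient := by
    rw [Nat.card_eq_fintype_card, ZMod.card_units_eq_totient]
  have h5 : (Finset.univ.filter (fun u : (ZMod n)ˣ => u ∈ K)).card = Nat.card K := by
    rw [Nat.card_eq_fintype_card, Fintype.card_subtype]
  rw [h5]
  rw [h2, h4] at h1
  rw [← h3, h1]
  ring

lemma sury_count (n : ℕ) (hn : 0 < n) (d : ℕ) (hd : d ∣ n) :
    ((Finset.Icc 1 n).filter (fun a => Nat.gcd a n = 1 ∧ d ∣ a - 1)).card * d.totient
      = n.totient := by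
  rcases Nat.lt_or_ge 1 n with h | h
  · exact sury_count_aux n h d hd
  · have hn1 : n = 1 := by omega
    subst hn1
    have hd1 : d = 1 := Nat.dvd_one.mp hd
    subst hd1
    decide

/-- Sury's identity: for every positive integer `n` and `s ≥ 0`,
`∑ gcd(a-1, b₁, …, b_s, n) = φ(n) · σ_s(n)`, the sum over `1 ≤ a, bᵢ ≤ n`
with `gcd(a, n) = 1`. -/
theorem sury_identity (n : ℕ) (hn : 0 < n) (s : ℕ) :
    ∑ a ∈ (Finset.Icc 1 n).filter (fun a => Nat.gcd a n = 1),
      ∑ b ∈ Fintype.piFinset (fun _ : Fin s => Finset.Icc 1 n),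
        Nat.gcd (a - 1) (Nat.gcd (Finset.univ.gcd b) n)
      = n.totient * ∑ d ∈ n.divisors, d ^ s := by
  classical
  have hn0 : n ≠ 0 := hn.ne'
  set A := (Finset.Icc 1 n).filter (fun a => Nat.gcd a n = 1) with hA
  set B := Fintype.piFinset (fun _ : Fin s => Finset.Icc 1 n) with hB
  calc
    ∑ a ∈ A, ∑ b ∈ B, Nat.gcd (a - 1) (Nat.gcd (Finset.univ.gcd b) n)
        = ∑ a ∈ A, ∑ b ∈ B, ∑ e ∈ n.divisors,
            if e ∣ a - 1 ∧ e ∣ Finset.univ.gcd b then e.totient else 0 := by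
        refine Finset.sum_congr rfl fun a _ => Finset.sum_congr rfl fun b _ => ?_
        set m := Nat.gcd (a - 1) (Nat.gcd (Finset.univ.gcd b) n) with hm
        have hmn : m ∣ n := (Nat.gcd_dvd_right (a - 1) _).trans (Nat.gcd_dvd_right _ n)
        conv_lhs => rw [← Nat.sum_totient m]
        rw [← Nat.divisors_filter_dvd_of_dvd hn0 hmn, Finset.sum_filter]
        refine Finset.sum_congr rfl fun e he => ?_
        have hen : e ∣ n := (Nat.mem_divisors.mp he).1
        have : (e ∣ m) ↔ (e ∣ a - 1 ∧ e ∣ Finset.univ.gcd b) := by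
          rw [hm, Nat.dvd_gcd_iff, Nat.dvd_gcd_iff]
          tauto
        exact if_congr this rfl rfl
    _ = ∑ e ∈ n.divisors, ∑ a ∈ A, ∑ b ∈ B,
          (if e ∣ a - 1 then e.totient else 0) * (if e ∣ Finset.univ.gcd b then 1 else 0) := by
        have h1 : (∑ a ∈ A, ∑ b ∈ B, ∑ e ∈ n.divisors,
            if e ∣ a - 1 ∧ e ∣ Finset.univ.gcd b then e.totient else 0)
            = ∑ a ∈ A, ∑ e ∈ n.divisors, ∑ b ∈ B,
              (if e ∣ a - 1 ∧ e ∣ Finset.univ.gcd b then e.totient else 0) :=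
          Finset.sum_congr rfl fun a _ => Finset.sum_comm
        rw [h1, Finset.sum_comm]
        refine Finset.sum_congr rfl fun e _ => Finset.sum_congr rfl fun a _ =>
          Finset.sum_congr rfl fun b _ => ?_
        by_cases h1 : e ∣ a - 1 <;> by_cases h2 : e ∣ Finset.univ.gcd b <;>
          simp [h1, h2]
    _ = ∑ e ∈ n.divisors,
          (∑ a ∈ A, if e ∣ a - 1 then e.totient else 0) *
          (∑ b ∈ B, if e ∣ Finset.univ.gcd b then 1 else 0) := by
        refine Finset.sum_congr rfl fun e _ => ?_
        rw [Finset.sum_mul_sum]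
    _ = ∑ e ∈ n.divisors, n.totient * (n / e) ^ s := by
        refine Finset.sum_congr rfl fun e he => ?_
        obtain ⟨hen, -⟩ := Nat.mem_divisors.mp he
        have hsa : (∑ a ∈ A, if e ∣ a - 1 then e.totient else 0) = n.totient := by
          rw [← Finset.sum_filter, Finset.sum_const, smul_eq_mul]
          rw [hA, Finset.filter_filter]
          exact sury_count n hn e hen
        have hsb : (∑ b ∈ B, if e ∣ Finset.univ.gcd b then 1 else 0) = (n / e) ^ s := by
          have hstep : ∀ b : Fin s → ℕ,
              (if e ∣ Finset.univ.gcd b then (1:ℕ) else 0)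
                = ∏ i : Fin s, (if e ∣ b i then 1 else 0) := by
            intro b
            rw [Fintype.prod_boole]
            congr 1
            simp [Finset.dvd_gcd_iff]
          calc (∑ b ∈ B, if e ∣ Finset.univ.gcd b then (1:ℕ) else 0)
              = ∑ b ∈ B, ∏ i : Fin s, (if e ∣ b i then 1 else 0) := by
                exact Finset.sum_congr rfl fun b _ => hstep b
            _ = ∏ i : Fin s, ∑ x ∈ Finset.Icc 1 n, (if e ∣ x then (1:ℕ) else 0) := by
                rw [hB, Finset.prod_univ_sum]
            _ = (n / e) ^ s := by
                have : (∑ x ∈ Finset.Icc 1 n, (if e ∣ x then (1:ℕ) else 0)) = n / e := by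
                  rw [Finset.sum_boole]
                  rw [show Finset.Icc 1 n = Finset.Ioc 0 n by rw [← Finset.Icc_add_one_left_eq_Ioc]; rfl]
                  exact_mod_cast Nat.Ioc_filter_dvd_card_eq_div n e
                rw [this, Finset.prod_const, Finset.card_univ, Fintype.card_fin]
        rw [hsa, hsb]
    _ = n.totient * ∑ e ∈ n.divisors, (n / e) ^ s := by rw [Finset.mul_sum]
    _ = n.totient * ∑ d ∈ n.divisors, d ^ s := by rw [Nat.sum_div_divisors n (fun d => d ^ s)]
end

section
/- Let n ≥ 2 and let χ be a Dirichlet character modulo n with conductor d. Then ∑_{a=1, gcd(a,n)=1}^{n} gcd(a-1, n)·χ(a) = φ(n)·σ₀(n/d). -/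
lemma CZ.gcd_eq_of_modEq {b c m : ℕ} (h : b ≡ c [MOD m]) : Nat.gcd b m = Nat.gcd c m := by
  rw [Nat.gcd_comm b m, Nat.gcd_comm c m, Nat.gcd_rec m b, Nat.gcd_rec m c, h]

lemma CZ.factorsThrough_gcd {n : ℕ} [NeZero n] (χ : DirichletCharacter ℂ n) {d₁ d₂ : ℕ}
    (h1 : χ.FactorsThrough d₁) (h2 : χ.FactorsThrough d₂) :
    χ.FactorsThrough (Nat.gcd d₁ d₂) := by
  have hd1 : d₁ ∣ n := h1.dvd
  have hd2 : d₂ ∣ n := h2.dvd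
  have hg : Nat.gcd d₁ d₂ ∣ n := (Nat.gcd_dvd_left d₁ d₂).trans hd1
  rw [DirichletCharacter.factorsThrough_iff_ker_unitsMap hg]
  rw [DirichletCharacter.factorsThrough_iff_ker_unitsMap hd1] at h1
  rw [DirichletCharacter.factorsThrough_iff_ker_unitsMap hd2] at h2
  intro u hu
  rw [MonoidHom.mem_ker] at hu
  set a : ℕ := (u : ZMod n).val with ha
  have hcop : a.Coprime n := ZMod.val_coe_unit_coprime u
  have hmod : a ≡ 1 [MOD Nat.gcd d₁ d₂] := by
    have : ((a : ZMod (Nat.gcd d₁ d₂))) = ((1 : ℕ) : ZMod (Nat.gcd d₁ d₂)) := by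
      have := congrArg (fun v : (ZMod (Nat.gcd d₁ d₂))ˣ => (v : ZMod (Nat.gcd d₁ d₂))) hu
      simpa [ZMod.unitsMap_def, ha, ZMod.natCast_val] using this
    exact (ZMod.natCast_eq_natCast_iff _ _ _).mp this
  obtain ⟨b, hb1, hb2⟩ := Nat.chineseRemainder' hmod
  have hbd1 : Nat.Coprime b d₁ := by
    have h' : Nat.gcd b d₁ = Nat.gcd a d₁ := CZ.gcd_eq_of_modEq hb1
    exact h'.trans (Nat.Coprime.coprime_dvd_right hd1 hcop)
  have hbd2 : Nat.Coprime b d₂ := by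
    have h' : Nat.gcd b d₂ = Nat.gcd 1 d₂ := CZ.gcd_eq_of_modEq hb2
    simpa [Nat.gcd_one_left] using h'
  have hlcm : Nat.lcm d₁ d₂ ∣ n := Nat.lcm_dvd hd1 hd2
  have hblcm : Nat.Coprime b (Nat.lcm d₁ d₂) :=
    Nat.Coprime.coprime_dvd_right (Nat.lcm_dvd_mul d₁ d₂) (hbd1.mul_right hbd2)
  obtain ⟨w, hw⟩ := ZMod.unitsMap_surjective hlcm (ZMod.unitOfCoprime b hblcm)
  have hwd2 : ZMod.unitsMap hd2 w = 1 := by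
    have hcomp : ZMod.unitsMap hd2 w
        = ZMod.unitsMap (Nat.dvd_lcm_right d₁ d₂) (ZMod.unitsMap hlcm w) := by
      rw [← MonoidHom.comp_apply, ZMod.unitsMap_comp]
    rw [hcomp, hw]
    ext
    have : ((b : ZMod d₂)) = ((1 : ℕ) : ZMod d₂) := (ZMod.natCast_eq_natCast_iff _ _ _).mpr hb2
    simpa [ZMod.unitsMap_def] using this
  have hwd1 : ZMod.unitsMap hd1 w = ZMod.unitsMap hd1 u := by
    have hcomp : ZMod.unitsMap hd1 w
        = ZMod.unitsMap (Nat.dvd_lcm_left d₁ d₂) (ZMod.unitsMap hlcm w) := by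
      rw [← MonoidHom.comp_apply, ZMod.unitsMap_comp]
    rw [hcomp, hw]
    ext
    have hba : ((b : ZMod d₁)) = ((a : ZMod d₁)) := (ZMod.natCast_eq_natCast_iff _ _ _).mpr hb1
    simp only [ZMod.unitsMap_def, Units.coe_map, MonoidHom.coe_coe, ZMod.coe_unitOfCoprime]
    rw [map_natCast, hba, ha, ZMod.natCast_val, ZMod.castHom_apply]
  have huw : u * w⁻¹ ∈ (ZMod.unitsMap hd1).ker := by
    rw [MonoidHom.mem_ker, map_mul, map_inv, hwd1, mul_inv_cancel]
  have hw2 : w ∈ (ZMod.unitsMap hd2).ker := MonoidHom.mem_ker.mpr hwd2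
  have e1 : χ.toUnitHom (u * w⁻¹) = 1 := h1 huw
  have e2 : χ.toUnitHom w = 1 := h2 hw2
  rw [MonoidHom.mem_ker]
  calc χ.toUnitHom u = χ.toUnitHom (u * w⁻¹ * w) := by group
    _ = χ.toUnitHom (u * w⁻¹) * χ.toUnitHom w := map_mul _ _ _
    _ = 1 := by rw [e1, e2, mul_one]

lemma CZ.conductor_dvd_of_factorsThrough {n : ℕ} [NeZero n] (χ : DirichletCharacter ℂ n)
    {e : ℕ} (he : χ.FactorsThrough e) : χ.conductor ∣ e := by
  have hg : χ.FactorsThrough (Nat.gcd e χ.conductor) :=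
    CZ.factorsThrough_gcd χ he (DirichletCharacter.factorsThrough_conductor χ)
  have h1 : χ.conductor ≤ Nat.gcd e χ.conductor :=
    Nat.sInf_le ((DirichletCharacter.mem_conductorSet_iff χ).mpr hg)
  have hc0 : χ.conductor ≠ 0 := DirichletCharacter.conductor_ne_zero χ
  have h3 : Nat.gcd e χ.conductor ≤ χ.conductor :=
    Nat.le_of_dvd (Nat.pos_of_ne_zero hc0) (Nat.gcd_dvd_right _ _)
  have h4 : Nat.gcd e χ.conductor = χ.conductor := le_antisymm h3 h1
  exact h4 ▸ Nat.gcd_dvd_left e _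

lemma CZ.sum_ker {n e : ℕ} [NeZero n] (χ : DirichletCharacter ℂ n)
    (hFT : χ.FactorsThrough e) (he : e ∣ n) :
    (e.totient : ℂ) * ∑ u : (ZMod n)ˣ, (if ZMod.unitsMap he u = 1 then χ u else 0)
      = (n.totient : ℂ) := by
  classical
  have hker := (DirichletCharacter.factorsThrough_iff_ker_unitsMap he).mp hFT
  have hsum : ∑ u : (ZMod n)ˣ, (if ZMod.unitsMap he u = 1 then χ u else 0)
      = ∑ u : (ZMod n)ˣ, (if ZMod.unitsMap he u = 1 then (1 : ℂ) else 0) := by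
    refine Finset.sum_congr rfl fun u _ => ?_
    by_cases h : ZMod.unitsMap he u = 1
    · simp only [h, if_true]
      have h1 : χ.toUnitHom u = 1 := hker (MonoidHom.mem_ker.mpr h)
      calc χ ↑u = ((χ.toUnitHom u : ℂˣ) : ℂ) := by rw [MulChar.coe_toUnitHom]
        _ = 1 := by rw [h1]; rfl
    · simp [h]
  rw [hsum, Finset.sum_boole]
  have hcard : (Finset.univ.filter (fun u : (ZMod n)ˣ => ZMod.unitsMap he u = 1)).card
      = Nat.card (ZMod.unitsMap (n := e) he).ker := by
    rw [Nat.card_eq_fintype_card, Fintype.card_subtype]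
    congr 1
    ext u
    simp [MonoidHom.mem_ker]
  have hne : NeZero e := ⟨fun h0 => NeZero.ne n (Nat.eq_zero_of_zero_dvd (h0 ▸ he))⟩
  have hqc : Nat.card ((ZMod n)ˣ ⧸ (ZMod.unitsMap (n := e) he).ker)
      = Nat.card (ZMod e)ˣ :=
    Nat.card_congr
      (QuotientGroup.quotientKerEquivOfSurjective _ (ZMod.unitsMap_surjective he)).toEquiv
  have hmain : Nat.card (ZMod n)ˣ
      = Nat.card (ZMod e)ˣ * Nat.card (ZMod.unitsMap (n := e) he).ker := by
    rw [← hqc]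
    exact Subgroup.card_eq_card_quotient_mul_card_subgroup _
  rw [Nat.card_eq_fintype_card, Nat.card_eq_fintype_card (α := (ZMod e)ˣ),
    ZMod.card_units_eq_totient, ZMod.card_units_eq_totient] at hmain
  rw [hcard, ← Nat.cast_mul, ← hmain]

lemma CZ.sum_ker_zero {n e : ℕ} [NeZero n] (χ : DirichletCharacter ℂ n)
    (hFT : ¬ χ.FactorsThrough e) (he : e ∣ n) :
    ∑ u : (ZMod n)ˣ, (if ZMod.unitsMap he u = 1 then χ u else 0) = 0 := by
  classical
  have hker := (DirichletCharacter.factorsThrough_iff_ker_unitsMap he).not.mp hFT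
  rw [SetLike.not_le_iff_exists] at hker
  obtain ⟨u₀, hu₀, hu₀'⟩ := hker
  rw [MonoidHom.mem_ker] at hu₀ hu₀'
  set S := ∑ u : (ZMod n)ˣ, (if ZMod.unitsMap he u = 1 then χ u else 0) with hS
  have hshift : S = χ ↑u₀ * S := by
    rw [hS, Finset.mul_sum]
    refine Fintype.sum_equiv (Equiv.mulLeft u₀⁻¹) _ _ fun u => ?_
    have hcond : ZMod.unitsMap he (u₀⁻¹ * u) = ZMod.unitsMap he u := by
      rw [map_mul, map_inv, hu₀, inv_one, one_mul]
    simp only [Equiv.coe_mulLeft, hcond]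
    by_cases h : ZMod.unitsMap he u = 1
    · simp only [h, if_true, Units.val_mul, ← map_mul]
      congr 1
      simp
    · simp [h]
  have hne : χ ↑u₀ ≠ 1 := by
    intro h
    apply hu₀'
    ext
    rw [MulChar.coe_toUnitHom, h]; rfl
  have : (χ ↑u₀ - 1) * S = 0 := by rw [sub_mul, one_mul, ← hshift, sub_self]
  rcases mul_eq_zero.mp this with h | h
  · exact absurd (by linear_combination h) hne
  · exact h

lemma CZ.sum_reindex {n : ℕ} [NeZero n] (hn : 2 ≤ n) {e : ℕ} (he : e ∣ n) (F : ZMod n → ℂ) :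
    ∑ a ∈ (Finset.Icc 1 n).filter (fun a => Nat.gcd a n = 1),
      (if e ∣ a - 1 then F (a : ZMod n) else 0)
    = ∑ u : (ZMod n)ˣ, (if ZMod.unitsMap he u = 1 then F ↑u else 0) := by
  classical
  refine Finset.sum_bij' (i := fun a ha => ZMod.unitOfCoprime a (by
      simp only [Finset.mem_filter, Finset.mem_Icc] at ha; exact ha.2))
    (j := fun u _ => (u : ZMod n).val) ?_ ?_ ?_ ?_ ?_
  · intro a ha; exact Finset.mem_univ _
  · intro u _
    have hcop : Nat.Coprime ((u : ZMod n).val) n := ZMod.val_coe_unit_coprime u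
    have hlt : (u : ZMod n).val < n := ZMod.val_lt _
    have hne : (u : ZMod n).val ≠ 0 := by
      intro h0
      rw [h0] at hcop
      simp [Nat.coprime_zero_left] at hcop
      omega
    simp only [Finset.mem_filter, Finset.mem_Icc]
    exact ⟨⟨by omega, by omega⟩, hcop⟩
  · intro a ha
    simp only [Finset.mem_filter, Finset.mem_Icc] at ha
    have hlt : a < n := by
      rcases Nat.lt_or_ge a n with h | h
      · exact h
      · exfalso; have : a = n := by omega
        rw [this, Nat.gcd_self] at ha; omega
    simp [ZMod.coe_unitOfCoprime, ZMod.val_natCast_of_lt hlt]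
  · intro u _
    ext
    simp [ZMod.coe_unitOfCoprime, ZMod.natCast_val, ZMod.cast_id]
  · intro a ha
    simp only [Finset.mem_filter, Finset.mem_Icc] at ha
    have hiff : (e ∣ a - 1) ↔ ZMod.unitsMap he (ZMod.unitOfCoprime a ha.2) = 1 := by
      rw [Units.ext_iff]
      have hval : (ZMod.unitsMap he (ZMod.unitOfCoprime a ha.2) : ZMod e) = (a : ZMod e) := by
        simp [ZMod.unitsMap_def, ZMod.coe_unitOfCoprime]
      rw [hval]
      constructor
      · intro h
        have : (1 : ℕ) ≡ a [MOD e] := (Nat.modEq_iff_dvd' ha.1.1).mpr h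
        have := (ZMod.natCast_eq_natCast_iff _ _ _).mpr this.symm
        simpa using this
      · intro h
        have : ((a : ℕ) : ZMod e) = ((1 : ℕ) : ZMod e) := by simpa using h
        have := (ZMod.natCast_eq_natCast_iff _ _ _).mp this
        exact (Nat.modEq_iff_dvd' ha.1.1).mp this.symm
    by_cases h : e ∣ a - 1
    · rw [if_pos h, if_pos (hiff.mp h), ZMod.coe_unitOfCoprime]
    · rw [if_neg h, if_neg (fun hc => h (hiff.mpr hc))]

lemma CZ.card_divisors_filter {n d : ℕ} (hn : n ≠ 0) (hd : d ∣ n) :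
    (n.divisors.filter (fun e => d ∣ e)).card = (n / d).divisors.card := by
  classical
  have hd0 : d ≠ 0 := fun h => hn (by simpa [h] using hd)
  have hdpos : 0 < d := Nat.pos_of_ne_zero hd0
  have hnd0 : n / d ≠ 0 := by
    have := Nat.div_pos (Nat.le_of_dvd (Nat.pos_of_ne_zero hn) hd) hdpos
    omega
  refine Finset.card_bij' (fun e _ => e / d) (fun k _ => d * k) ?_ ?_ ?_ ?_
  · intro e he
    simp only [Finset.mem_filter, Nat.mem_divisors] at he
    obtain ⟨⟨hen, _⟩, hde⟩ := he
    obtain ⟨k, rfl⟩ := hde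
    obtain ⟨m, hm⟩ := hen
    show d * k / d ∈ (n / d).divisors
    rw [Nat.mul_div_cancel_left k hdpos]
    refine Nat.mem_divisors.mpr ⟨⟨m, ?_⟩, hnd0⟩
    rw [hm, mul_assoc, Nat.mul_div_cancel_left _ hdpos]
  · intro k hk
    simp only [Nat.mem_divisors] at hk
    simp only [Finset.mem_filter, Nat.mem_divisors]
    refine ⟨⟨?_, hn⟩, Dvd.intro k rfl⟩
    calc d * k ∣ d * (n / d) := mul_dvd_mul_left d hk.1
      _ = n := Nat.mul_div_cancel' hd
  · intro e he
    simp only [Finset.mem_filter, Nat.mem_divisors] at he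
    exact Nat.mul_div_cancel' he.2
  · intro k _
    exact Nat.mul_div_cancel_left k hdpos

/-- Cao–Zhao identity: for `n ≥ 2` and `χ` a Dirichlet character mod `n`
with conductor `d`, `∑_{gcd(a,n)=1} gcd(a-1,n) χ(a) = φ(n) σ₀(n/d)`. -/
theorem cao_zhao_identity (n : ℕ) (hn : 2 ≤ n) (χ : DirichletCharacter ℂ n) :
    ∑ a ∈ (Finset.Icc 1 n).filter (fun a => Nat.gcd a n = 1),
      (Nat.gcd (a - 1) n : ℂ) * χ (a : ZMod n)
      = (n.totient : ℂ) * ((n / χ.conductor).divisors.card : ℂ) := by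
  classical
  haveI : NeZero n := ⟨by omega⟩
  have hgcd : ∀ a : ℕ, (Nat.gcd (a - 1) n)
      = ∑ e ∈ n.divisors, (if e ∣ a - 1 then e.totient else 0) := by
    intro a
    rw [← Finset.sum_filter]
    have hfe : n.divisors.filter (fun e => e ∣ a - 1) = (Nat.gcd (a - 1) n).divisors := by
      ext x
      simp only [Finset.mem_filter, Nat.mem_divisors]
      constructor
      · rintro ⟨⟨h1, h2⟩, h3⟩
        refine ⟨Nat.dvd_gcd h3 h1, fun hg => h2 ?_⟩
        exact ((Nat.gcd_eq_zero_iff).mp hg).2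
      · rintro ⟨h1, _⟩
        exact ⟨⟨h1.trans (Nat.gcd_dvd_right _ _), NeZero.ne n⟩,
          h1.trans (Nat.gcd_dvd_left _ _)⟩
    rw [hfe, Nat.sum_totient]
  calc ∑ a ∈ (Finset.Icc 1 n).filter (fun a => Nat.gcd a n = 1),
        (Nat.gcd (a - 1) n : ℂ) * χ (a : ZMod n)
      = ∑ a ∈ (Finset.Icc 1 n).filter (fun a => Nat.gcd a n = 1),
        ∑ e ∈ n.divisors, (if e ∣ a - 1 then (e.totient : ℂ) * χ (a : ZMod n) else 0) := by
        refine Finset.sum_congr rfl fun a _ => ?_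
        rw [hgcd a, Nat.cast_sum, Finset.sum_mul]
        refine Finset.sum_congr rfl fun e _ => ?_
        split_ifs with h <;> simp
    _ = ∑ e ∈ n.divisors, ∑ a ∈ (Finset.Icc 1 n).filter (fun a => Nat.gcd a n = 1),
        (if e ∣ a - 1 then (e.totient : ℂ) * χ (a : ZMod n) else 0) := Finset.sum_comm
    _ = ∑ e ∈ n.divisors, (if χ.conductor ∣ e then (n.totient : ℂ) else 0) := by
        refine Finset.sum_congr rfl fun e he => ?_
        have hedvd : e ∣ n := (Nat.mem_divisors.mp he).1
        rw [CZ.sum_reindex hn hedvd (fun x => (e.totient : ℂ) * χ x)]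
        have hfac : (∑ u : (ZMod n)ˣ,
            (if ZMod.unitsMap hedvd u = 1 then (e.totient : ℂ) * χ ↑u else 0))
            = (e.totient : ℂ) * ∑ u : (ZMod n)ˣ,
              (if ZMod.unitsMap hedvd u = 1 then χ ↑u else 0) := by
          rw [Finset.mul_sum]
          refine Finset.sum_congr rfl fun u _ => ?_
          split_ifs <;> simp
        rw [hfac]
        by_cases hde : χ.conductor ∣ e
        · have hFT : χ.FactorsThrough e := by
            obtain ⟨hdn, χ₀, hχ⟩ := DirichletCharacter.factorsThrough_conductor χ
            exact ⟨hedvd, DirichletCharacter.changeLevel hde χ₀, by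
              rw [← DirichletCharacter.changeLevel_trans χ₀ hde hedvd]
              exact hχ⟩
          rw [CZ.sum_ker χ hFT hedvd, if_pos hde]
        · have hnFT : ¬ χ.FactorsThrough e := fun h =>
            hde (CZ.conductor_dvd_of_factorsThrough χ h)
          rw [CZ.sum_ker_zero χ hnFT hedvd, mul_zero, if_neg hde]
    _ = (n.totient : ℂ) * ((n.divisors.filter (fun e => χ.conductor ∣ e)).card : ℂ) := by
        rw [← Finset.sum_filter, Finset.sum_const, nsmul_eq_mul, mul_comm]
    _ = (n.totient : ℂ) * ((n / χ.conductor).divisors.card : ℂ) := by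
        rw [CZ.card_divisors_filter (NeZero.ne n) (DirichletCharacter.conductor_dvd_level χ)]
end

section
/- For every positive integer n, ∑ gcd(a₁ + a₂ - 1, n) = φ₂(n)·σ₀(n), where the sum ranges over 1 ≤ a₁, a₂ ≤ n with gcd(a₁a₂, n) = 1 and gcd(a₁+a₂, n) = 1, and φ₂(n) is the number of such pairs (a₁, a₂). -/
/-- `phi2 n` counts pairs `(a₁, a₂)` with `1 ≤ a₁, a₂ ≤ n`, `gcd(a₁a₂, n) = 1`
and `gcd(a₁ + a₂, n) = 1`, i.e. pairs of units mod `n` whose sum is a unit. -/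
def phi2 (n : ℕ) : ℕ :=
  ((Finset.Icc 1 n ×ˢ Finset.Icc 1 n).filter
    (fun p => Nat.gcd (p.1 * p.2) n = 1 ∧ Nat.gcd (p.1 + p.2) n = 1)).card

namespace SitaAux

open Finset

variable {n : ℕ} [NeZero n]

/-- The unit-pair set in `ZMod n`. -/
def T (n : ℕ) [NeZero n] : Finset (ZMod n × ZMod n) :=
  Finset.univ.filter fun p => IsUnit p.1 ∧ IsUnit p.2 ∧ IsUnit (p.1 + p.2)

lemma mem_T {p : ZMod n × ZMod n} :
    p ∈ T n ↔ IsUnit p.1 ∧ IsUnit p.2 ∧ IsUnit (p.1 + p.2) := by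
  simp [T]

/-- Inverse of the natural map `Icc 1 n → ZMod n`. -/
noncomputable def lift (x : ZMod n) : ℕ := if x = 0 then n else x.val

lemma lift_mem (x : ZMod n) : lift x ∈ Finset.Icc 1 n := by
  have hn : 0 < n := Nat.pos_of_ne_zero (NeZero.ne n)
  unfold lift
  split_ifs with h
  · simp [Finset.mem_Icc]; omega
  · have h1 : 0 < x.val := by
      rcases Nat.eq_zero_or_pos x.val with h0 | h0
      · exact absurd ((ZMod.val_eq_zero x).mp h0) h
      · exact h0
    have h2 : x.val < n := ZMod.val_lt x
    simp [Finset.mem_Icc]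
    omega

lemma cast_lift (x : ZMod n) : ((lift x : ℕ) : ZMod n) = x := by
  unfold lift
  split_ifs with h
  · simp [h, ZMod.natCast_self]
  · simp [ZMod.natCast_val, ZMod.cast_id]

lemma lift_cast {a : ℕ} (ha : a ∈ Finset.Icc 1 n) : lift ((a : ℕ) : ZMod n) = a := by
  rw [Finset.mem_Icc] at ha
  unfold lift
  rcases eq_or_lt_of_le ha.2 with h | h
  · subst h
    simp [ZMod.natCast_self]
  · have h0 : ((a : ℕ) : ZMod n) ≠ 0 := by
      intro hc
      have := (ZMod.natCast_eq_zero_iff a n).mp hc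
      have := Nat.le_of_dvd (by omega) this
      omega
    rw [if_neg h0, ZMod.val_natCast, Nat.mod_eq_of_lt h]


lemma card_fiber_eq {d : ℕ} [NeZero d] (h : d ∣ n) (c : (ZMod d)ˣ) :
    ((T n).filter fun p => ZMod.castHom h (ZMod d) (p.1 + p.2) = (c : ZMod d)).card
      = ((T n).filter fun p => ZMod.castHom h (ZMod d) (p.1 + p.2) = 1).card := by
  obtain ⟨v, hv⟩ := ZMod.unitsMap_surjective h c
  have hπv : ZMod.castHom h (ZMod d) (v : ZMod n) = (c : ZMod d) := by
    rw [← hv]; rfl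
  apply Finset.card_nbij'
      (fun p => (((v⁻¹ : (ZMod n)ˣ) : ZMod n) * p.1, ((v⁻¹ : (ZMod n)ˣ) : ZMod n) * p.2))
      (fun p => ((v : ZMod n) * p.1, (v : ZMod n) * p.2))
  · intro p hp
    rw [Finset.mem_coe, Finset.mem_filter, mem_T] at hp ⊢
    obtain ⟨⟨h1, h2, h3⟩, h4⟩ := hp
    refine ⟨⟨(v⁻¹).isUnit.mul h1, (v⁻¹).isUnit.mul h2, ?_⟩, ?_⟩
    · rw [← mul_add]; exact (v⁻¹).isUnit.mul h3
    · have : ((v⁻¹ : (ZMod n)ˣ) : ZMod n) * p.1 + ((v⁻¹ : (ZMod n)ˣ) : ZMod n) * p.2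
          = ((v⁻¹ : (ZMod n)ˣ) : ZMod n) * (p.1 + p.2) := by ring
      rw [this, map_mul, h4]
      have : ZMod.castHom h (ZMod d) ((v⁻¹ : (ZMod n)ˣ) : ZMod n) = ((c⁻¹ : (ZMod d)ˣ) : ZMod d) := by
        rw [← hv]; rfl
      rw [this]
      simp [Units.mul_inv_eq_one]
  · intro p hp
    rw [Finset.mem_coe, Finset.mem_filter, mem_T] at hp ⊢
    obtain ⟨⟨h1, h2, h3⟩, h4⟩ := hp
    refine ⟨⟨v.isUnit.mul h1, v.isUnit.mul h2, ?_⟩, ?_⟩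
    · rw [← mul_add]; exact v.isUnit.mul h3
    · have : (v : ZMod n) * p.1 + (v : ZMod n) * p.2 = (v : ZMod n) * (p.1 + p.2) := by ring
      rw [this, map_mul, h4, hπv, mul_one]
  · intro p _
    simp [← mul_assoc]
  · intro p _
    simp [← mul_assoc]

lemma card_T_eq {d : ℕ} [NeZero d] (h : d ∣ n) :
    (T n).card = d.totient *
      ((T n).filter fun p => ZMod.castHom h (ZMod d) (p.1 + p.2) = 1).card := by
  classical
  have hpart : (T n).card = ∑ b ∈ Finset.image (fun c : (ZMod d)ˣ => (c : ZMod d)) Finset.univ,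
      ((T n).filter fun p => ZMod.castHom h (ZMod d) (p.1 + p.2) = b).card := by
    apply Finset.card_eq_sum_card_fiberwise
    intro p hp
    rw [Finset.mem_coe, mem_T] at hp
    have hu : IsUnit (ZMod.castHom h (ZMod d) (p.1 + p.2)) := hp.2.2.map _
    rw [Finset.mem_coe, Finset.mem_image]
    exact ⟨hu.unit, Finset.mem_univ _, rfl⟩
  rw [hpart, Finset.sum_image (fun a _ b _ hab => Units.ext hab)]
  rw [Finset.sum_congr rfl (fun c _ => card_fiber_eq h c)]
  rw [Finset.sum_const, smul_eq_mul, Finset.card_univ, ZMod.card_units_eq_totient]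

lemma cond_iff {d : ℕ} [NeZero d] (h : d ∣ n) (w : ZMod n) :
    d ∣ (w - 1).val ↔ ZMod.castHom h (ZMod d) w = 1 := by
  rw [← ZMod.natCast_eq_zero_iff]
  have : (((w - 1).val : ℕ) : ZMod d) = ZMod.castHom h (ZMod d) (w - 1) := by
    rw [ZMod.natCast_val, ZMod.castHom_apply]
  rw [this, map_sub, map_one, sub_eq_zero]


omit [NeZero n] in
lemma gcd_eq_sum {m : ℕ} (hn : n ≠ 0) :
    Nat.gcd m n = ∑ d ∈ n.divisors.filter (· ∣ m), d.totient := by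
  conv_lhs => rw [← Nat.sum_totient (Nat.gcd m n)]
  apply Finset.sum_congr _ (fun _ _ => rfl)
  ext d
  have hg : Nat.gcd m n ≠ 0 := fun hc => hn (Nat.eq_zero_of_gcd_eq_zero_right hc)
  simp only [Nat.mem_divisors, Finset.mem_filter, Nat.dvd_gcd_iff]
  tauto

lemma zmod_sum :
    ∑ p ∈ T n, Nat.gcd ((p.1 + p.2 - 1).val) n = (T n).card * n.divisors.card := by
  classical
  have hn : n ≠ 0 := NeZero.ne n
  calc ∑ p ∈ T n, Nat.gcd ((p.1 + p.2 - 1).val) n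
      = ∑ p ∈ T n, ∑ d ∈ n.divisors.filter (· ∣ (p.1 + p.2 - 1).val), d.totient :=
        Finset.sum_congr rfl fun p _ => gcd_eq_sum hn
    _ = ∑ p ∈ T n, ∑ d ∈ n.divisors, if d ∣ (p.1 + p.2 - 1).val then d.totient else 0 := by
        simp [Finset.sum_filter]
    _ = ∑ d ∈ n.divisors, ∑ p ∈ T n, if d ∣ (p.1 + p.2 - 1).val then d.totient else 0 :=
        Finset.sum_comm
    _ = ∑ d ∈ n.divisors, (T n).card := by
        apply Finset.sum_congr rfl
        intro d hd
        rw [Nat.mem_divisors] at hd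
        obtain ⟨hdvd, -⟩ := hd
        have hd0 : d ≠ 0 := by
          rintro rfl
          exact hn (Nat.eq_zero_of_zero_dvd hdvd)
        haveI : NeZero d := ⟨hd0⟩
        rw [← Finset.sum_filter, Finset.sum_const, smul_eq_mul]
        have hfilter : (T n).filter (fun p => d ∣ (p.1 + p.2 - 1).val)
            = (T n).filter (fun p => ZMod.castHom hdvd (ZMod d) (p.1 + p.2) = 1) := by
          apply Finset.filter_congr
          intro p _
          exact cond_iff hdvd (p.1 + p.2)
        rw [hfilter, mul_comm, ← card_T_eq hdvd]
    _ = (T n).card * n.divisors.card := by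
        rw [Finset.sum_const, smul_eq_mul, mul_comm]

lemma sum_transfer (g : ZMod n → ℕ) :
    ∑ p ∈ (Finset.Icc 1 n ×ˢ Finset.Icc 1 n).filter
        (fun p => Nat.gcd (p.1 * p.2) n = 1 ∧ Nat.gcd (p.1 + p.2) n = 1),
      g ((p.1 : ZMod n) + (p.2 : ZMod n)) = ∑ p ∈ T n, g (p.1 + p.2) := by
  apply Finset.sum_nbij' (fun p => (((p.1 : ℕ) : ZMod n), ((p.2 : ℕ) : ZMod n)))
      (fun q => (lift q.1, lift q.2))
  · intro p hp
    rw [Finset.mem_filter] at hp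
    rw [mem_T]
    obtain ⟨hmem, h1, h2⟩ := hp
    have hu1 : IsUnit ((p.1 : ZMod n) * (p.2 : ZMod n)) := by
      have := (ZMod.isUnit_iff_coprime (p.1 * p.2) n).mpr h1
      push_cast at this
      exact this
    have hu2 : IsUnit ((p.1 : ZMod n) + (p.2 : ZMod n)) := by
      have := (ZMod.isUnit_iff_coprime (p.1 + p.2) n).mpr h2
      push_cast at this
      exact this
    obtain ⟨ha, hb⟩ := IsUnit.mul_iff.mp hu1
    exact ⟨ha, hb, hu2⟩
  · intro q hq
    rw [mem_T] at hq
    obtain ⟨h1, h2, h3⟩ := hq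
    rw [Finset.mem_filter]
    refine ⟨Finset.mem_product.mpr ⟨lift_mem _, lift_mem _⟩, ?_, ?_⟩
    · apply (ZMod.isUnit_iff_coprime (lift q.1 * lift q.2) n).mp
      push_cast [cast_lift]
      exact h1.mul h2
    · apply (ZMod.isUnit_iff_coprime (lift q.1 + lift q.2) n).mp
      push_cast [cast_lift]
      exact h3
  · intro p hp
    rw [Finset.mem_filter, Finset.mem_product] at hp
    exact Prod.ext (lift_cast hp.1.1) (lift_cast hp.1.2)
  · intro q _
    exact Prod.ext (cast_lift q.1) (cast_lift q.2)
  · intro p _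
    rfl

end SitaAux

/-- Sita Ramaiah's identity: `∑ gcd(a₁+a₂-1, n) = φ₂(n) σ₀(n)`, the sum over
`1 ≤ a₁, a₂ ≤ n` with `gcd(a₁a₂, n) = 1` and `gcd(a₁+a₂, n) = 1`. -/
theorem sita_ramaiah_identity (n : ℕ) (hn : 0 < n) :
    ∑ p ∈ (Finset.Icc 1 n ×ˢ Finset.Icc 1 n).filter
        (fun p => Nat.gcd (p.1 * p.2) n = 1 ∧ Nat.gcd (p.1 + p.2) n = 1),
      Nat.gcd (p.1 + p.2 - 1) n
      = phi2 n * n.divisors.card := by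
  haveI : NeZero n := ⟨hn.ne'⟩
  have hcard : phi2 n = (SitaAux.T n).card := by
    rw [phi2, Finset.card_eq_sum_ones, Finset.card_eq_sum_ones (SitaAux.T n)]
    exact SitaAux.sum_transfer (fun _ => 1)
  have hsum : ∑ p ∈ (Finset.Icc 1 n ×ˢ Finset.Icc 1 n).filter
        (fun p => Nat.gcd (p.1 * p.2) n = 1 ∧ Nat.gcd (p.1 + p.2) n = 1),
      Nat.gcd (p.1 + p.2 - 1) n
      = ∑ p ∈ (Finset.Icc 1 n ×ˢ Finset.Icc 1 n).filter
        (fun p => Nat.gcd (p.1 * p.2) n = 1 ∧ Nat.gcd (p.1 + p.2) n = 1),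
      (fun z : ZMod n => Nat.gcd ((z - 1).val) n) ((p.1 : ZMod n) + (p.2 : ZMod n)) := by
    apply Finset.sum_congr rfl
    intro p hp
    rw [Finset.mem_filter, Finset.mem_product, Finset.mem_Icc, Finset.mem_Icc] at hp
    have h1 : 1 ≤ p.1 + p.2 := by omega
    have hcast : ((p.1 + p.2 - 1 : ℕ) : ZMod n) = (p.1 : ZMod n) + (p.2 : ZMod n) - 1 := by
      rw [Nat.cast_sub h1]
      push_cast
      ring
    simp only []
    rw [Nat.gcd_comm (p.1 + p.2 - 1) n, Nat.gcd_rec n (p.1 + p.2 - 1), ← ZMod.val_natCast,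
      hcast, Nat.gcd_comm]
  have htrans := SitaAux.sum_transfer (n := n) (fun z : ZMod n => Nat.gcd ((z - 1).val) n)
  rw [hsum, htrans, SitaAux.zmod_sum, hcard]
end

section
/- For every positive integer n and every integer k ≥ 1, ∑ gcd(a₁ + ⋯ + a_k - 1, n) = φ_k(n)·σ₀(n), where the sum ranges over 1 ≤ a₁, …, a_k ≤ n with gcd(a₁⋯a_k, n) = 1 and gcd(a₁+⋯+a_k, n) = 1, and φ_k(n) denotes the number of such k-tuples. -/
/-- `phik k n` counts `k`-tuples `(a₁, …, a_k)` with `1 ≤ aᵢ ≤ n`,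
`gcd(a₁⋯a_k, n) = 1` and `gcd(a₁+⋯+a_k, n) = 1`. -/
def phik (k n : ℕ) : ℕ :=
  ((Fintype.piFinset (fun _ : Fin k => Finset.Icc 1 n)).filter
    (fun a => Nat.gcd (∏ i, a i) n = 1 ∧ Nat.gcd (∑ i, a i) n = 1)).card


open Finset

private lemma ker_count (n d : ℕ) [NeZero n] (hd : d ∣ n) :
    (Finset.univ.filter (fun u : (ZMod n)ˣ => d ∣ ((u : ZMod n) - 1).val)).card * d.totient
      = n.totient := by
  haveI : NeZero d := ⟨fun h => (NeZero.ne n) (eq_zero_of_zero_dvd (h ▸ hd))⟩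
  set f := ZMod.unitsMap hd with hf
  have hcond : ∀ u : (ZMod n)ˣ, (d ∣ ((u : ZMod n) - 1).val) ↔ f u = 1 := by
    intro u
    rw [← ZMod.natCast_eq_zero_iff, ZMod.natCast_val]
    have h1 : (ZMod.cast (((u : ZMod n)) - 1) : ZMod d)
        = ZMod.castHom hd (ZMod d) ((u : ZMod n)) - 1 := by
      rw [← ZMod.castHom_apply (h := hd), map_sub, map_one]
    have h2 : (f u : ZMod d) = ZMod.castHom hd (ZMod d) ((u : ZMod n)) := by
      simp [hf, ZMod.unitsMap]
    rw [h1, sub_eq_zero, Units.ext_iff, Units.val_one, h2, eq_comm]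
  have hpred : (fun u : (ZMod n)ˣ => d ∣ ((u : ZMod n) - 1).val) = (fun u => u ∈ f.ker) :=
    funext fun u => propext ((hcond u).trans (f.mem_ker).symm)
  have hfilter : (Finset.univ.filter (fun u : (ZMod n)ˣ => d ∣ ((u : ZMod n) - 1).val)).card
      = Nat.card f.ker := by
    classical
    rw [Finset.filter_congr (fun u (_ : u ∈ univ) => (hcond u).trans (f.mem_ker).symm)]
    simp only [Nat.card_eq_fintype_card, Fintype.card_subtype]
  have hsurj := ZMod.unitsMap_surjective hd
  have h1 : Nat.card ((ZMod n)ˣ) = Nat.card ((ZMod n)ˣ ⧸ f.ker) * Nat.card f.ker :=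
    Subgroup.card_eq_card_quotient_mul_card_subgroup f.ker
  have h2 : Nat.card ((ZMod n)ˣ ⧸ f.ker) = Nat.card ((ZMod d)ˣ) :=
    Nat.card_congr (QuotientGroup.quotientKerEquivOfSurjective f hsurj).toEquiv
  have h3 : Nat.card ((ZMod n)ˣ) = n.totient := by
    rw [Nat.card_eq_fintype_card, ZMod.card_units_eq_totient]
  have h4 : Nat.card ((ZMod d)ˣ) = d.totient := by
    rw [Nat.card_eq_fintype_card, ZMod.card_units_eq_totient]
  rw [hfilter, ← h3, h1, h2, h4, mul_comm]

private lemma gcd_eq_sum_divisors (n : ℕ) [NeZero n] (m : ℕ) :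
    Nat.gcd m n = ∑ d ∈ n.divisors.filter (· ∣ m), d.totient := by
  conv_lhs => rw [← Nat.sum_totient (Nat.gcd m n)]
  apply Finset.sum_congr _ (fun _ _ => rfl)
  ext d
  simp only [Nat.mem_divisors, mem_filter]
  constructor
  · rintro ⟨hd, -⟩
    exact ⟨⟨(Nat.dvd_gcd_iff.mp hd).2, NeZero.ne n⟩, (Nat.dvd_gcd_iff.mp hd).1⟩
  · rintro ⟨⟨hdn, -⟩, hdm⟩
    refine ⟨Nat.dvd_gcd hdm hdn, ?_⟩
    simp [Nat.gcd_eq_zero_iff, NeZero.ne n]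

lemma menon (n : ℕ) [NeZero n] :
    ∑ u : (ZMod n)ˣ, Nat.gcd ((u : ZMod n) - 1).val n
      = n.totient * n.divisors.card := by
  classical
  calc ∑ u : (ZMod n)ˣ, Nat.gcd ((u : ZMod n) - 1).val n
      = ∑ u : (ZMod n)ˣ, ∑ d ∈ n.divisors,
          if d ∣ ((u : ZMod n) - 1).val then d.totient else 0 := by
        refine Finset.sum_congr rfl fun u _ => ?_
        rw [gcd_eq_sum_divisors, Finset.sum_filter]
    _ = ∑ d ∈ n.divisors, ∑ u : (ZMod n)ˣ,
          if d ∣ ((u : ZMod n) - 1).val then d.totient else 0 := Finset.sum_comm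
    _ = ∑ d ∈ n.divisors,
          (Finset.univ.filter (fun u : (ZMod n)ˣ => d ∣ ((u : ZMod n) - 1).val)).card
            * d.totient := by
        refine Finset.sum_congr rfl fun d _ => ?_
        rw [← Finset.sum_filter, Finset.sum_const, smul_eq_mul]
    _ = ∑ d ∈ n.divisors, n.totient := by
        refine Finset.sum_congr rfl fun d hd => ?_
        exact ker_count n d (Nat.mem_divisors.mp hd).1
    _ = n.totient * n.divisors.card := by
        rw [Finset.sum_const, smul_eq_mul, mul_comm]

private lemma toth_zmod (n : ℕ) [NeZero n] (k : ℕ)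
    (S : Finset (Fin k → ZMod n))
    (hS : S = Finset.univ.filter (fun b : Fin k → ZMod n =>
      IsUnit (∏ i, b i) ∧ IsUnit (∑ i, b i))) :
    ∑ b ∈ S, Nat.gcd ((∑ i, b i) - 1).val n = S.card * n.divisors.card := by
  classical
  set g : ZMod n → ℕ := fun s => Nat.gcd (s - 1).val n with hg
  set c : ZMod n → ℕ := fun s => (S.filter (fun b => ∑ i, b i = s)).card with hc
  -- constancy of fibers on units
  have hfib : ∀ s : ZMod n, IsUnit s → c s = c 1 := by
    intro s hs
    have hinv1 : (↑hs.unit⁻¹ : ZMod n) * s = 1 := hs.val_inv_mul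
    have hinv2 : s * (↑hs.unit⁻¹ : ZMod n) = 1 := hs.mul_val_inv
    have hu : IsUnit (↑hs.unit⁻¹ : ZMod n) := Units.isUnit _
    refine (Finset.card_nbij' (fun b => fun j => s * b j)
      (fun b => fun j => (↑hs.unit⁻¹ : ZMod n) * b j) ?_ ?_ ?_ ?_).symm
    · intro b hb
      simp only [hS, Finset.mem_coe, mem_filter, mem_univ, true_and] at hb ⊢
      obtain ⟨⟨hprod, hsum⟩, hsb⟩ := hb
      refine ⟨⟨?_, ?_⟩, ?_⟩
      · rw [Finset.prod_mul_distrib, Finset.prod_const]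
        exact (hs.pow _).mul hprod
      · rw [← Finset.mul_sum, hsb, mul_one]
        exact hs
      · rw [← Finset.mul_sum, hsb, mul_one]
    · intro b hb
      simp only [hS, Finset.mem_coe, mem_filter, mem_univ, true_and] at hb ⊢
      obtain ⟨⟨hprod, hsum⟩, hsb⟩ := hb
      refine ⟨⟨?_, ?_⟩, ?_⟩
      · rw [Finset.prod_mul_distrib, Finset.prod_const]
        exact (hu.pow _).mul hprod
      · rw [← Finset.mul_sum, hsb, hinv1]
        exact isUnit_one
      · rw [← Finset.mul_sum, hsb, hinv1]
    · intro b _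
      funext j
      show (↑hs.unit⁻¹ : ZMod n) * (s * b j) = b j
      rw [← mul_assoc, hinv1, one_mul]
    · intro b _
      funext j
      show s * ((↑hs.unit⁻¹ : ZMod n) * b j) = b j
      rw [← mul_assoc, hinv2, one_mul]
  -- fiberwise decomposition
  have hdecomp : ∑ b ∈ S, g (∑ i, b i) = ∑ s : ZMod n, c s * g s := by
    rw [← Finset.sum_fiberwise' S (fun b => ∑ i, b i) g]
    refine Finset.sum_congr rfl fun s _ => ?_
    rw [Finset.sum_const, smul_eq_mul]
  -- fibers over non-units are empty
  have hzero : ∀ s : ZMod n, ¬ IsUnit s → c s = 0 := by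
    intro s hs
    rw [hc]
    simp only [Finset.card_eq_zero, Finset.filter_eq_empty_iff]
    intro b hb hsb
    rw [hS, mem_filter] at hb
    exact hs (hsb ▸ hb.2.2)
  -- sum over units
  have hunits : ∀ h : ZMod n → ℕ, ∑ s ∈ Finset.univ.filter IsUnit, h s
      = ∑ u : (ZMod n)ˣ, h ↑u := by
    intro h
    refine (Finset.sum_nbij (t := Finset.univ.filter IsUnit) (g := h)
      (fun u : (ZMod n)ˣ => (u : ZMod n)) ?_ ?_ ?_ (fun _ _ => rfl)).symm
    · intro u _
      simp [Units.isUnit]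
    · intro u _ v _ huv
      exact Units.ext huv
    · intro t hsm
      simp only [Finset.coe_filter, Set.mem_setOf_eq] at hsm
      exact ⟨hsm.2.unit, by simp, hsm.2.unit_spec⟩
  have hcard_units : (Finset.univ.filter (IsUnit : ZMod n → Prop)).card
      = n.totient := by
    rw [← ZMod.card_units_eq_totient n, Fintype.card, Finset.card_eq_sum_ones,
      Finset.card_eq_sum_ones, hunits (fun _ => 1)]
  -- main computation
  have hsumS : ∑ b ∈ S, g (∑ i, b i) = c 1 * (n.totient * n.divisors.card) := by
    rw [hdecomp]
    rw [← Finset.sum_filter_of_ne (p := IsUnit)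
      (fun s _ hne => by
        by_contra hs
        rw [hzero s hs, zero_mul] at hne
        exact hne rfl)]
    calc ∑ s ∈ Finset.univ.filter IsUnit, c s * g s
        = ∑ s ∈ Finset.univ.filter IsUnit, c 1 * g s := by
          refine Finset.sum_congr rfl fun s hs => ?_
          rw [hfib s (Finset.mem_filter.mp hs).2]
      _ = c 1 * ∑ s ∈ Finset.univ.filter IsUnit, g s := by rw [Finset.mul_sum]
      _ = c 1 * ∑ u : (ZMod n)ˣ, g ↑u := by rw [hunits]
      _ = c 1 * (n.totient * n.divisors.card) := by rw [hg]; rw [menon n]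
  have hcardS : S.card = n.totient * c 1 := by
    rw [Finset.card_eq_sum_card_fiberwise
      (f := fun b => ∑ i, b i) (t := Finset.univ) (fun _ _ => Finset.mem_univ _)]
    rw [← Finset.sum_filter_of_ne (p := IsUnit)
      (fun s _ hne => by
        by_contra hs
        exact hne (hzero s hs))]
    calc ∑ s ∈ Finset.univ.filter IsUnit, c s
        = ∑ s ∈ Finset.univ.filter IsUnit, c 1 :=
          Finset.sum_congr rfl fun s hs => hfib s (Finset.mem_filter.mp hs).2
      _ = n.totient * c 1 := by rw [Finset.sum_const, smul_eq_mul, hcard_units]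
  rw [hsumS, hcardS]
  ring

private lemma cast_back (n : ℕ) [NeZero n] (b : ZMod n) :
    (((if b = 0 then n else b.val) : ℕ) : ZMod n) = b := by
  split_ifs with h
  · simp [h]
  · rw [ZMod.natCast_val, ZMod.cast_id]

lemma gcd_cast (n : ℕ) [NeZero n] (m : ℕ) :
    Nat.gcd ((m : ZMod n)).val n = Nat.gcd m n := by
  rw [ZMod.val_natCast, Nat.gcd_comm m n, Nat.gcd_rec n m]

/-- Tóth's identity: for `n ≥ 1` and `k ≥ 1`,
`∑ gcd(a₁+⋯+a_k-1, n) = φ_k(n) σ₀(n)`, the sum over tuples with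
`gcd(a₁⋯a_k, n) = 1` and `gcd(a₁+⋯+a_k, n) = 1`. -/
theorem toth_identity (n : ℕ) (hn : 0 < n) (k : ℕ) (hk : 1 ≤ k) :
    ∑ a ∈ (Fintype.piFinset (fun _ : Fin k => Finset.Icc 1 n)).filter
        (fun a => Nat.gcd (∏ i, a i) n = 1 ∧ Nat.gcd (∑ i, a i) n = 1),
      Nat.gcd ((∑ i, a i) - 1) n
      = phik k n * n.divisors.card := by
  classical
  haveI : NeZero n := ⟨hn.ne'⟩
  set A := (Fintype.piFinset (fun _ : Fin k => Finset.Icc 1 n)).filter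
    (fun a => Nat.gcd (∏ i, a i) n = 1 ∧ Nat.gcd (∑ i, a i) n = 1) with hA
  set S := Finset.univ.filter (fun b : Fin k → ZMod n =>
    IsUnit (∏ i, b i) ∧ IsUnit (∑ i, b i)) with hS
  set F : (Fin k → ℕ) → (Fin k → ZMod n) := fun a => fun j => ((a j : ℕ) : ZMod n) with hF
  set G : (Fin k → ZMod n) → (Fin k → ℕ) :=
    fun b => fun j => if b j = 0 then n else (b j).val with hG
  have hi : ∀ a ∈ A, F a ∈ S := by
    intro a ha
    rw [hA, mem_filter, Fintype.mem_piFinset] at ha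
    obtain ⟨hmem, hprod, hsum⟩ := ha
    rw [hS, mem_filter]
    refine ⟨mem_univ _, ?_, ?_⟩
    · rw [hF]
      show IsUnit (∏ j, ((a j : ℕ) : ZMod n))
      rw [← Nat.cast_prod]
      exact (ZMod.isUnit_iff_coprime _ n).mpr hprod
    · rw [hF]
      show IsUnit (∑ j, ((a j : ℕ) : ZMod n))
      rw [← Nat.cast_sum]
      exact (ZMod.isUnit_iff_coprime _ n).mpr hsum
  have hcastG : ∀ (b : Fin k → ZMod n) (j : Fin k), ((G b j : ℕ) : ZMod n) = b j :=
    fun b j => cast_back n (b j)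
  have hj : ∀ b ∈ S, G b ∈ A := by
    intro b hb
    rw [hS, mem_filter] at hb
    obtain ⟨-, hprod, hsum⟩ := hb
    rw [hA, mem_filter, Fintype.mem_piFinset]
    refine ⟨fun j => ?_, ?_, ?_⟩
    · rw [mem_Icc, hG]
      dsimp only
      split_ifs with h
      · exact ⟨hn, le_refl n⟩
      · refine ⟨Nat.one_le_iff_ne_zero.mpr (fun hv => h ((ZMod.val_eq_zero _).mp hv)), ?_⟩
        exact le_of_lt (ZMod.val_lt (b j))
    · have : ((∏ j, G b j : ℕ) : ZMod n) = ∏ j, b j := by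
        rw [Nat.cast_prod]
        exact Finset.prod_congr rfl fun j _ => hcastG b j
      exact (ZMod.isUnit_iff_coprime _ n).mp (this ▸ hprod)
    · have : ((∑ j, G b j : ℕ) : ZMod n) = ∑ j, b j := by
        rw [Nat.cast_sum]
        exact Finset.sum_congr rfl fun j _ => hcastG b j
      exact (ZMod.isUnit_iff_coprime _ n).mp (this ▸ hsum)
  have hleft : ∀ a ∈ A, G (F a) = a := by
    intro a ha
    rw [hA, mem_filter, Fintype.mem_piFinset] at ha
    funext j
    have hmem := ha.1 j
    rw [mem_Icc] at hmem
    rw [hG, hF]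
    dsimp only
    split_ifs with h
    · rw [ZMod.natCast_eq_zero_iff] at h
      exact Nat.le_antisymm (Nat.le_of_dvd hmem.1 h) hmem.2
    · have hlt : a j < n := by
        rcases Nat.lt_or_ge (a j) n with h' | h'
        · exact h'
        · exact absurd (by rw [Nat.le_antisymm hmem.2 h']; exact ZMod.natCast_self n) h
      exact ZMod.val_natCast_of_lt hlt
  have hright : ∀ b ∈ S, F (G b) = b := by
    intro b _
    funext j
    exact hcastG b j
  have hval : ∀ a ∈ A, Nat.gcd ((∑ i, a i) - 1) n = Nat.gcd ((∑ i, F a i) - 1).val n := by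
    intro a ha
    rw [hA, mem_filter, Fintype.mem_piFinset] at ha
    have hone : 1 ≤ ∑ j, a j := by
      calc (1 : ℕ) ≤ k := hk
        _ = ∑ _j : Fin k, 1 := by simp
        _ ≤ ∑ j, a j := Finset.sum_le_sum fun j _ => (mem_Icc.mp (ha.1 j)).1
    have hFsum : (∑ i, F a i) = (((∑ i, a i) : ℕ) : ZMod n) := by
      rw [Nat.cast_sum]
    rw [hFsum, ← Nat.cast_one (R := ZMod n), ← Nat.cast_sub hone, gcd_cast]
  have hsum : ∑ a ∈ A, Nat.gcd ((∑ i, a i) - 1) n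
      = ∑ b ∈ S, Nat.gcd ((∑ i, b i) - 1).val n :=
    Finset.sum_nbij' F G hi hj hleft hright hval
  have hcard : phik k n = S.card := Finset.card_nbij' F G hi hj hleft hright
  rw [hsum, hcard]
  exact toth_zmod n k S hS
end

section
/- For every positive integer n, φ₂(n) = φ(n)² · ∑_{d∣n} μ(d)/φ(d), where φ₂(n) = #{(a₁,a₂) ∈ (ℤ/nℤ)² : a₁, a₂, a₁+a₂ are all units}, μ is the Möbius function and φ is Euler's totient. -/
open ArithmeticFunction
open scoped ArithmeticFunction.Moebius
open scoped ArithmeticFunction.zeta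

section Helpers

-- counting in Icc 1 n via ZMod n
lemma icc_filter_card (n : ℕ) [NeZero n] (Q : ZMod n → Prop) [DecidablePred Q] :
    ((Finset.Icc 1 n).filter (fun a : ℕ => Q (↑a : ZMod n))).card
      = (Finset.univ.filter Q).card := by
  have hn : 0 < n := Nat.pos_of_ne_zero (NeZero.ne n)
  have key : ∀ a : ℕ, 1 ≤ a → a ≤ n → (if a % n = 0 then n else a % n) = a := by
    intro a h1 h2
    rcases eq_or_lt_of_le h2 with rfl | h
    · simp [Nat.mod_self]
    · rw [Nat.mod_eq_of_lt h, if_neg (by omega)]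
  refine Finset.card_bij (fun (a : ℕ) _ => (↑a : ZMod n)) ?_ ?_ ?_
  · intro a ha
    simp only [Finset.mem_filter, Finset.mem_Icc] at ha
    simpa using ha.2
  · intro a ha b hb hab
    simp only [Finset.mem_filter, Finset.mem_Icc] at ha hb
    have h := congrArg ZMod.val hab
    rw [ZMod.val_natCast, ZMod.val_natCast] at h
    rw [← key a ha.1.1 ha.1.2, ← key b hb.1.1 hb.1.2, h]
  · intro x hx
    simp only [Finset.mem_filter, Finset.mem_univ, true_and] at hx
    have hlt := ZMod.val_lt x
    have hcast : ((if x.val = 0 then n else x.val : ℕ) : ZMod n) = x := by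
      apply ZMod.val_injective
      rw [ZMod.val_natCast]
      rcases eq_or_ne x.val 0 with h0 | h0
      · rw [if_pos h0, Nat.mod_self, h0]
      · rw [if_neg h0, Nat.mod_eq_of_lt hlt]
    refine ⟨if x.val = 0 then n else x.val, ?_, hcast⟩
    simp only [Finset.mem_filter, Finset.mem_Icc]
    refine ⟨⟨?_, ?_⟩, by rw [hcast]; exact hx⟩
    · split <;> omega
    · split <;> omega

-- filter over ZMod by IsUnit ∧ P ↔ filter over units
lemma units_filter_card (n : ℕ) [NeZero n] (P : ZMod n → Prop) [DecidablePred P] :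
    (Finset.univ.filter (fun x : ZMod n => IsUnit x ∧ P x)).card
      = (Finset.univ.filter (fun u : (ZMod n)ˣ => P ↑u)).card := by
  symm
  refine Finset.card_bij (fun (u : (ZMod n)ˣ) _ => (↑u : ZMod n)) ?_ ?_ ?_
  · intro u hu
    simp only [Finset.mem_filter, Finset.mem_univ, true_and] at hu ⊢
    exact ⟨u.isUnit, hu⟩
  · intro a _ b _ hab
    exact Units.ext hab
  · intro x hx
    simp only [Finset.mem_filter, Finset.mem_univ, true_and] at hx
    exact ⟨hx.1.unit, by simpa [hx.1.unit_spec] using hx.2, hx.1.unit_spec⟩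

-- fibers of a surjective monoid hom between finite groups
lemma fiber_card {G H : Type*} [Group G] [Group H] [Fintype G] [Fintype H]
    [DecidableEq H] (f : G →* H) (hf : Function.Surjective f) (h : H) :
    (Finset.univ.filter (fun g => f g = h)).card * Fintype.card H = Fintype.card G := by
  have hconst : ∀ h₁ h₂ : H,
      (Finset.univ.filter (fun g => f g = h₁)).card
        = (Finset.univ.filter (fun g => f g = h₂)).card := by
    intro h₁ h₂
    obtain ⟨g₁, hg₁⟩ := hf h₁
    obtain ⟨g₂, hg₂⟩ := hf h₂
    refine Finset.card_bij (fun g _ => g * g₁⁻¹ * g₂) ?_ ?_ ?_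
    · intro g hg
      simp only [Finset.mem_filter, Finset.mem_univ, true_and] at hg ⊢
      simp [map_mul, hg, hg₁, hg₂]
    · intro a _ b _ hab
      simpa using hab
    · intro g hg
      simp only [Finset.mem_filter, Finset.mem_univ, true_and] at hg
      refine ⟨g * g₂⁻¹ * g₁, ?_, by group⟩
      simp [map_mul, hg, hg₁, hg₂]
  have hsum : ∑ h' : H, (Finset.univ.filter (fun g => f g = h')).card
      = Fintype.card G := by
    rw [← Finset.card_eq_sum_card_fiberwise (f := f) (fun x _ => Finset.mem_univ _)]
    rfl
  rw [← hsum]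
  rw [Finset.sum_congr rfl (fun h' _ => hconst h' h)]
  rw [Finset.sum_const, smul_eq_mul, Finset.card_univ, mul_comm]

example : True := trivial

lemma count_fiber (n d : ℕ) [NeZero n] (hd : d ∣ n) (t : ZMod d) (ht : IsUnit t) :
    ((Finset.Icc 1 n).filter
        (fun b : ℕ => Nat.gcd b n = 1 ∧ (↑b : ZMod d) = t)).card * d.totient
      = n.totient := by
  haveI : NeZero d := ⟨fun h => (NeZero.ne n) (eq_zero_of_zero_dvd (h ▸ hd))⟩
  have hfil : (Finset.Icc 1 n).filter
        (fun b : ℕ => Nat.gcd b n = 1 ∧ (↑b : ZMod d) = t)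
      = (Finset.Icc 1 n).filter
        (fun b : ℕ => IsUnit (↑b : ZMod n) ∧ ZMod.castHom hd (ZMod d) (↑b : ZMod n) = t) := by
    apply Finset.filter_congr
    intro b _
    rw [ZMod.isUnit_iff_coprime, map_natCast (ZMod.castHom hd (ZMod d))]
  rw [hfil]
  rw [icc_filter_card n (fun x : ZMod n => IsUnit x ∧ ZMod.castHom hd (ZMod d) x = t)]
  rw [units_filter_card n (fun x : ZMod n => ZMod.castHom hd (ZMod d) x = t)]
  have hco : ∀ u : (ZMod n)ˣ,
      (ZMod.castHom hd (ZMod d) (↑u : ZMod n) = t) ↔ ZMod.unitsMap hd u = ht.unit := by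
    intro u
    rw [Units.ext_iff, ZMod.unitsMap_def]
    simp [ht.unit_spec]
  rw [Finset.filter_congr (fun u _ => hco u)]
  rw [← ZMod.card_units_eq_totient n, ← ZMod.card_units_eq_totient d]
  exact fiber_card (ZMod.unitsMap hd) (ZMod.unitsMap_surjective hd) ht.unit

end Helpers

/-- Carlitz's formula: `φ₂(n) = φ(n)² ∑_{d ∣ n} μ(d)/φ(d)`. -/
theorem phi2_formula (n : ℕ) (hn : 0 < n) :
    (phi2 n : ℚ) = (n.totient : ℚ) ^ 2 * ∑ d ∈ n.divisors, (μ d : ℚ) / (d.totient : ℚ) := by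
  haveI : NeZero n := ⟨hn.ne'⟩
  classical
  set A : Finset ℕ := (Finset.Icc 1 n).filter (fun a : ℕ => Nat.gcd a n = 1) with hA
  -- |A| = φ(n)
  have hAcard : A.card = n.totient := by
    have h0 : IsUnit (0 : ZMod 1) := isUnit_of_subsingleton 0
    have hK := count_fiber n 1 (one_dvd n) 0 h0
    rw [Nat.totient_one, mul_one] at hK
    rw [← hK, hA]
    congr 1
    apply Finset.filter_congr
    intro b _
    simp [Subsingleton.elim ((↑b : ZMod 1)) 0]
  -- step 1 : indicator sum over A × A
  have hphi2 : (phi2 n : ℚ)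
      = ∑ a ∈ A, ∑ b ∈ A, (if Nat.gcd (a + b) n = 1 then (1 : ℚ) else 0) := by
    have hexp : ∑ a ∈ A, ∑ b ∈ A, (if Nat.gcd (a + b) n = 1 then (1 : ℚ) else 0)
        = ∑ a ∈ Finset.Icc 1 n, ∑ b ∈ Finset.Icc 1 n,
            (if Nat.gcd (a * b) n = 1 ∧ Nat.gcd (a + b) n = 1 then (1 : ℚ) else 0) := by
      rw [hA, Finset.sum_filter]
      apply Finset.sum_congr rfl
      intro a _
      have hmul : ∀ b : ℕ, Nat.gcd (a * b) n = 1
          ↔ (Nat.gcd a n = 1 ∧ Nat.gcd b n = 1) := fun b => Nat.coprime_mul_iff_left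
      rcases eq_or_ne (Nat.gcd a n) 1 with h1 | h1
      · rw [if_pos h1, Finset.sum_filter]
        apply Finset.sum_congr rfl
        intro b _
        by_cases h2 : Nat.gcd b n = 1 <;> by_cases h3 : Nat.gcd (a + b) n = 1 <;>
          simp [hmul, h1, h2, h3]
      · rw [if_neg h1]
        symm
        apply Finset.sum_eq_zero
        intro b _
        rw [if_neg]
        intro hcon
        exact h1 ((hmul b).1 hcon.1).1
    rw [hexp, phi2, Finset.card_filter]
    push_cast
    rw [Finset.sum_product]
  -- Möbius inversion of the coprimality indicator
  have hmu : ∀ m : ℕ, (if m = 1 then (1 : ℚ) else 0) = ∑ d ∈ m.divisors, (μ d : ℚ) := by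
    intro m
    have h1 : (μ * ζ : ArithmeticFunction ℤ) m = (1 : ArithmeticFunction ℤ) m := by
      rw [moebius_mul_coe_zeta]
    rw [coe_mul_zeta_apply] at h1
    have h2 : ((1 : ArithmeticFunction ℤ) m) = if m = 1 then (1 : ℤ) else 0 :=
      ArithmeticFunction.one_apply
    rw [h2] at h1
    have h3 : ((∑ d ∈ m.divisors, μ d : ℤ) : ℚ) = ((if m = 1 then (1:ℤ) else 0 : ℤ) : ℚ) :=
      congrArg _ h1
    push_cast at h3
    rw [← h3]
  -- divisors of gcd
  have hdiv : ∀ a b : ℕ, (Nat.gcd (a + b) n).divisors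
      = n.divisors.filter (fun d => d ∣ a + b) := by
    intro a b
    ext d
    simp only [Nat.mem_divisors, Finset.mem_filter, Nat.dvd_gcd_iff, Nat.gcd_eq_zero_iff]
    constructor
    · rintro ⟨⟨h1, h2⟩, _⟩
      exact ⟨⟨h2, hn.ne'⟩, h1⟩
    · rintro ⟨⟨h2, _⟩, h1⟩
      exact ⟨⟨h1, h2⟩, fun h => hn.ne' (Nat.eq_zero_of_gcd_eq_zero_right h)⟩
  -- inner count
  have hinner : ∀ d ∈ n.divisors, ∀ a ∈ A,
      ∑ b ∈ A, (if d ∣ a + b then (1 : ℚ) else 0)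
        = (n.totient : ℚ) / (d.totient : ℚ) := by
    intro d hdmem a ha
    obtain ⟨hd, -⟩ := Nat.mem_divisors.1 hdmem
    haveI : NeZero d := ⟨fun h => (NeZero.ne n) (eq_zero_of_zero_dvd (h ▸ hd))⟩
    have hcop : Nat.gcd a n = 1 := (Finset.mem_filter.1 ha).2
    have htu : IsUnit (-(↑a : ZMod d)) := by
      rw [IsUnit.neg_iff, ZMod.isUnit_iff_coprime]
      exact Nat.Coprime.coprime_dvd_right hd hcop
    have hK := count_fiber n d hd (-(↑a : ZMod d)) htu
    have hfil : A.filter (fun b => d ∣ a + b)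
        = (Finset.Icc 1 n).filter
            (fun b : ℕ => Nat.gcd b n = 1 ∧ (↑b : ZMod d) = -(↑a : ZMod d)) := by
      rw [hA, Finset.filter_filter]
      apply Finset.filter_congr
      intro b _
      have : (d ∣ a + b) ↔ ((↑b : ZMod d) = -(↑a : ZMod d)) := by
        rw [← ZMod.natCast_eq_zero_iff]
        push_cast
        rw [add_eq_zero_iff_eq_neg]
        constructor
        · intro h; rw [← neg_neg (↑b : ZMod d), h]
        · intro h; rw [h, neg_neg]
      rw [this]
    rw [Finset.sum_boole, hfil]
    have hdt : (d.totient : ℚ) ≠ 0 := by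
      exact_mod_cast (Nat.totient_pos.2 (Nat.pos_of_ne_zero (NeZero.ne d))).ne'
    rw [eq_div_iff hdt]
    exact_mod_cast hK
  -- assemble
  rw [hphi2]
  have : ∀ a ∈ A, ∀ b ∈ A, (if Nat.gcd (a + b) n = 1 then (1 : ℚ) else 0)
      = ∑ d ∈ n.divisors, (if d ∣ a + b then (μ d : ℚ) else 0) := by
    intro a _ b _
    rw [hmu, hdiv a b, Finset.sum_filter]
  rw [Finset.sum_congr rfl (fun a ha => Finset.sum_congr rfl (fun b hb => this a ha b hb))]
  have hstep : ∀ a ∈ A,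
      ∑ b ∈ A, ∑ d ∈ n.divisors, (if d ∣ a + b then (μ d : ℚ) else 0)
        = ∑ d ∈ n.divisors, (μ d : ℚ) * ((n.totient : ℚ) / (d.totient : ℚ)) := by
    intro a ha
    rw [Finset.sum_comm]
    apply Finset.sum_congr rfl
    intro d hd
    rw [← hinner d hd a ha, Finset.mul_sum]
    apply Finset.sum_congr rfl
    intro b _
    rw [mul_ite, mul_one, mul_zero]
  rw [Finset.sum_congr rfl hstep, Finset.sum_const, hAcard, nsmul_eq_mul]
  rw [Finset.mul_sum, Finset.mul_sum]
  exact Finset.sum_congr rfl fun d _ => by ring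
end

section
/- Let p be a prime, m ≥ 1, and χ a Dirichlet character modulo p^m with conductor p^t. For 1 ≤ k ≤ m, the sum ∑ χ(a₁) over pairs of units a₁, a₂ mod p^m with a₁ + a₂ ≡ 1 (mod p^k) equals p^{m-k}(p^m - 2p^{m-1}) if t = 0, equals -p^{2m-k-1} if t = 1, and equals 0 if t ≥ 2. -/
section helpers

lemma csL1 {M : Type*} [AddCommMonoid M] (N : ℕ) [NeZero N] (G : ZMod N → M) :
    ∑ a ∈ Finset.Icc 1 N, G a = ∑ x : ZMod N, G x := by
  have hN : 0 < N := Nat.pos_of_ne_zero (NeZero.ne N)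
  refine Finset.sum_nbij' (fun a => (a : ZMod N))
    (fun x => if x.val = 0 then N else x.val) ?_ ?_ ?_ ?_ ?_
  · intro a _; exact Finset.mem_univ _
  · intro x _
    by_cases h : x.val = 0 <;> simp only [h, if_true, if_false, Finset.mem_Icc]
    · exact ⟨hN, le_rfl⟩
    · exact ⟨Nat.one_le_iff_ne_zero.mpr h, (ZMod.val_lt x).le⟩
  · intro a ha
    simp only [Finset.mem_Icc] at ha
    simp only [ZMod.val_natCast]
    by_cases h : a % N = 0
    · simp only [h, if_true]
      have hd : N ∣ a := Nat.dvd_of_mod_eq_zero h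
      exact Nat.le_antisymm (Nat.le_of_dvd (by omega) hd) ha.2
    · simp only [h, if_false]
      have : a < N := by
        rcases Nat.lt_or_ge a N with h'|h'
        · exact h'
        · exfalso; apply h; have : a = N := le_antisymm ha.2 h'; simp [this]
      exact Nat.mod_eq_of_lt this
  · intro x _
    by_cases h : x.val = 0 <;> simp only [h, if_true, if_false]
    · rw [ZMod.natCast_self]
      exact ((ZMod.val_eq_zero x).mp h).symm
    · exact ZMod.natCast_rightInverse x
  · intro a _; rfl

lemma csL2 (N q : ℕ) [NeZero N] [NeZero q] (h : q ∣ N) (c : ZMod q) :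
    (Finset.univ.filter fun x : ZMod N => ZMod.castHom h (ZMod q) x = c).card = N / q := by
  have hq : 0 < q := Nat.pos_of_ne_zero (NeZero.ne q)
  have hN : 0 < N := Nat.pos_of_ne_zero (NeZero.ne N)
  obtain ⟨r, hr⟩ := id h
  have hr' : N / q = r := by rw [hr]; exact Nat.mul_div_cancel_left r hq
  rw [hr']
  have key := Finset.card_bij (s := Finset.range r)
    (t := Finset.univ.filter fun x : ZMod N => ZMod.castHom h (ZMod q) x = c)
    (fun b _ => ((c.val + q * b : ℕ) : ZMod N)) ?_ ?_ ?_
  · rw [Finset.card_range r] at key; exact key.symm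
  · intro b hb
    simp only [Finset.mem_filter, Finset.mem_univ, true_and]
    rw [map_natCast]
    push_cast
    simp [ZMod.natCast_rightInverse c, ZMod.natCast_self]
  · intro b₁ hb₁ b₂ hb₂ hEq
    simp only [Finset.mem_range] at hb₁ hb₂
    have h1 : c.val + q * b₁ < N := by
      have := ZMod.val_lt c
      calc c.val + q * b₁ < q + q * b₁ := by omega
        _ ≤ q + q * (r - 1) := Nat.add_le_add_left (Nat.mul_le_mul_left q (by omega)) q
        _ ≤ q * r := by
            rw [Nat.mul_sub_one]
            have : q ≤ q * r := Nat.le_mul_of_pos_right q (by omega)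
            omega
        _ = N := hr.symm
    have h2 : c.val + q * b₂ < N := by
      have := ZMod.val_lt c
      calc c.val + q * b₂ < q + q * b₂ := by omega
        _ ≤ q + q * (r - 1) := Nat.add_le_add_left (Nat.mul_le_mul_left q (by omega)) q
        _ ≤ q * r := by
            rw [Nat.mul_sub_one]
            have : q ≤ q * r := Nat.le_mul_of_pos_right q (by omega)
            omega
        _ = N := hr.symm
    have := (ZMod.natCast_eq_natCast_iff _ _ _).mp hEq
    have := Nat.ModEq.eq_of_lt_of_lt this h1 h2
    have : q * b₁ = q * b₂ := by omega
    exact Nat.eq_of_mul_eq_mul_left hq this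
  · intro x hx
    simp only [Finset.mem_filter, Finset.mem_univ, true_and] at hx
    refine ⟨x.val / q, Finset.mem_range.mpr ?_, ?_⟩
    · have hv : x.val < N := ZMod.val_lt x
      exact Nat.div_lt_of_lt_mul (lt_of_lt_of_eq hv hr)
    · have hc : c.val = x.val % q := by
        rw [← hx, ZMod.castHom_apply, ← ZMod.natCast_val, ZMod.val_natCast]
      show ((c.val + q * (x.val / q) : ℕ) : ZMod N) = x
      rw [hc, Nat.mod_add_div]
      exact ZMod.natCast_rightInverse x

lemma csL3 (p k m' : ℕ) (hp : p.Prime) (hk1 : 1 ≤ k) (hkm : k ≤ m')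
    (y : ZMod (p ^ m')) :
    IsUnit y ↔ IsUnit (ZMod.castHom (pow_dvd_pow p hkm) (ZMod (p ^ k)) y) := by
  haveI : NeZero (p ^ m') := ⟨pow_ne_zero _ hp.ne_zero⟩
  haveI : NeZero (p ^ k) := ⟨pow_ne_zero _ hp.ne_zero⟩
  have hy : y = ((y.val : ℕ) : ZMod (p ^ m')) := (ZMod.natCast_rightInverse y).symm
  rw [ZMod.castHom_apply, ← ZMod.natCast_val]
  conv_lhs => rw [hy]
  rw [ZMod.isUnit_iff_coprime, ZMod.isUnit_iff_coprime,
    Nat.coprime_pow_right_iff (show 0 < m' by omega),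
    Nat.coprime_pow_right_iff (show 0 < k by omega)]

lemma csL4 {n : ℕ} [NeZero n] (χ : DirichletCharacter ℂ n) (Q : ZMod n → Prop)
    [DecidablePred Q] (u : (ZMod n)ˣ) (hQ : ∀ x, Q ((u : ZMod n) * x) ↔ Q x)
    (hu : χ u ≠ 1) :
    ∑ x : ZMod n, (if Q x then χ x else 0) = 0 := by
  have key : ∑ x : ZMod n, (if Q x then χ ((u : ZMod n) * x) else 0)
      = ∑ x : ZMod n, (if Q x then χ x else 0) := by
    apply Finset.sum_nbij' (fun x => (u : ZMod n) * x) (fun x => ((u⁻¹ : (ZMod n)ˣ) : ZMod n) * x)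
      (fun x _ => Finset.mem_univ _) (fun x _ => Finset.mem_univ _)
    · intro x _; rw [← mul_assoc, ← Units.val_mul, inv_mul_cancel, Units.val_one, one_mul]
    · intro x _; rw [← mul_assoc, ← Units.val_mul, mul_inv_cancel, Units.val_one, one_mul]
    · intro x _
      simp only [hQ x]
  have key2 : ∀ x : ZMod n, (if Q x then χ ((u : ZMod n) * x) else 0)
      = χ u * (if Q x then χ x else 0) := by
    intro x
    by_cases h : Q x <;> simp [h, map_mul]
  simp_rw [key2] at key
  rw [← Finset.mul_sum] at key
  have h2 : (χ (u : ZMod n) - 1) * (∑ x : ZMod n, (if Q x then χ x else 0)) = 0 := by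
    rw [sub_mul, one_mul, key, sub_self]
  exact (mul_eq_zero.mp h2).resolve_left (sub_ne_zero.mpr hu)

-- t ≤ 1 : χ is trivial on the kernel of reduction to ZMod (p^1)
lemma csL5 (p m t : ℕ) (hp : p.Prime) (hm : 1 ≤ m)
    (χ : DirichletCharacter ℂ (p ^ m)) (hχ : χ.conductor = p ^ t) (ht : t ≤ 1)
    (x : ZMod (p ^ m)) (hx : ZMod.castHom (pow_dvd_pow p hm) (ZMod (p ^ 1)) x = 1) :
    χ x = 1 := by
  haveI : NeZero (p ^ m) := ⟨pow_ne_zero _ hp.ne_zero⟩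
  have hd1 : p ^ 1 ∣ p ^ m := pow_dvd_pow p hm
  have hdt : p ^ t ∣ p ^ m := pow_dvd_pow p (le_trans ht hm)
  have hft : χ.FactorsThrough (p ^ t) := hχ ▸ χ.factorsThrough_conductor
  have hker := (DirichletCharacter.factorsThrough_iff_ker_unitsMap hdt).mp hft
  have hker1 : (ZMod.unitsMap hd1).ker ≤ χ.toUnitHom.ker := by
    intro v hv
    apply hker
    rw [MonoidHom.mem_ker] at hv ⊢
    have hcomp := ZMod.unitsMap_comp (pow_dvd_pow p ht) hd1
    have : ZMod.unitsMap hdt v = (ZMod.unitsMap (pow_dvd_pow p ht)) (ZMod.unitsMap hd1 v) := by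
      rw [← MonoidHom.comp_apply, hcomp]
    rw [this, hv, map_one]
  -- x is a unit
  have hxu : IsUnit x := by
    rw [csL3 p 1 m hp le_rfl hm x, hx]
    exact isUnit_one
  have hvker : hxu.unit ∈ (ZMod.unitsMap hd1).ker := by
    rw [MonoidHom.mem_ker]
    ext
    rw [ZMod.unitsMap_def]
    simpa [hxu.unit_spec] using hx
  have := hker1 hvker
  rw [MonoidHom.mem_ker] at this
  have h2 := congrArg (Units.val) this
  rw [MulChar.coe_toUnitHom, hxu.unit_spec] at h2
  simpa using h2

-- t ≥ 2 : there is x with x ≡ 1 mod p and χ x ≠ 1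
lemma csL6 (p m t : ℕ) (hp : p.Prime) (hm : 1 ≤ m)
    (χ : DirichletCharacter ℂ (p ^ m)) (hχ : χ.conductor = p ^ t) (ht : 2 ≤ t) :
    ∃ x : ZMod (p ^ m), ZMod.castHom (pow_dvd_pow p hm) (ZMod (p ^ 1)) x = 1 ∧ χ x ≠ 1 := by
  haveI : NeZero (p ^ m) := ⟨pow_ne_zero _ hp.ne_zero⟩
  have hd1 : p ^ 1 ∣ p ^ m := pow_dvd_pow p hm
  by_contra hcon
  push_neg at hcon
  have hker1 : (ZMod.unitsMap hd1).ker ≤ χ.toUnitHom.ker := by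
    intro v hv
    rw [MonoidHom.mem_ker] at hv ⊢
    have h1 : ZMod.castHom hd1 (ZMod (p ^ 1)) (v : ZMod (p ^ m)) = 1 := by
      have := congrArg (Units.val) hv
      rw [ZMod.unitsMap_def] at this
      simpa using this
    have h2 := hcon (v : ZMod (p ^ m)) h1
    ext
    rw [MulChar.coe_toUnitHom]
    simpa using h2
  have hft : χ.FactorsThrough (p ^ 1) :=
    (DirichletCharacter.factorsThrough_iff_ker_unitsMap hd1).mpr hker1
  have hle : χ.conductor ≤ p ^ 1 := Nat.sInf_le hft
  rw [hχ] at hle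
  have : t ≤ 1 := (pow_le_pow_iff_right₀ hp.one_lt).mp hle
  omega

end helpers

/-- For a Dirichlet character `χ` mod `p^m` with conductor `p^t` and `1 ≤ k ≤ m`,
the sum of `χ(a₁)` over pairs of units `a₁, a₂` mod `p^m` with
`a₁ + a₂ ≡ 1 (mod p^k)` equals `p^{m-k}(p^m - 2p^{m-1})` if `t = 0`,
`-p^{2m-k-1}` if `t = 1`, and `0` if `t ≥ 2`. -/
theorem char_sum_pairs_congruent (p m t k : ℕ) (hp : p.Prime) (hm : 1 ≤ m)
    (htm : t ≤ m) (hk1 : 1 ≤ k) (hkm : k ≤ m)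
    (χ : DirichletCharacter ℂ (p ^ m)) (hχ : χ.conductor = p ^ t) :
    ∑ a₁ ∈ (Finset.Icc 1 (p ^ m)).filter (fun a => Nat.gcd a (p ^ m) = 1),
      ∑ a₂ ∈ (Finset.Icc 1 (p ^ m)).filter
          (fun a₂ => Nat.gcd a₂ (p ^ m) = 1 ∧ a₁ + a₂ ≡ 1 [MOD p ^ k]),
        χ (a₁ : ZMod (p ^ m))
      = if t = 0 then (p : ℂ) ^ (m - k) * ((p : ℂ) ^ m - 2 * (p : ℂ) ^ (m - 1))
        else if t = 1 then -(p : ℂ) ^ (2 * m - k - 1)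
        else 0 := by
  classical
  haveI : NeZero (p ^ m) := ⟨pow_ne_zero _ hp.ne_zero⟩
  haveI : NeZero (p ^ k) := ⟨pow_ne_zero _ hp.ne_zero⟩
  haveI : NeZero (p ^ 1) := ⟨pow_ne_zero _ hp.ne_zero⟩
  have hdq : p ^ k ∣ p ^ m := pow_dvd_pow p hkm
  have hd1 : p ^ 1 ∣ p ^ m := pow_dvd_pow p hm
  have hd1k : p ^ 1 ∣ p ^ k := pow_dvd_pow p hk1
  set πq := ZMod.castHom hdq (ZMod (p ^ k)) with hπq
  set π₁ := ZMod.castHom hd1 (ZMod (p ^ 1)) with hπ₁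
  haveI : Fact (Nat.Prime (p ^ 1)) := ⟨by simpa using hp⟩
  -- composition of casts
  have hcomp : ∀ x : ZMod (p ^ m),
      ZMod.castHom hd1k (ZMod (p ^ 1)) (πq x) = π₁ x := by
    intro x
    rw [hπ₁, hπq, ← ZMod.castHom_comp hd1k hdq]
    rfl
  -- unit iff image under π₁ is ≠ ...
  have hNU : ∀ x : ZMod (p ^ m), IsUnit (1 - πq x) ↔ π₁ x ≠ 1 := by
    intro x
    rw [csL3 p 1 k hp le_rfl hk1 (1 - πq x)]
    have : ZMod.castHom (pow_dvd_pow p hk1) (ZMod (p ^ 1)) (1 - πq x) = 1 - π₁ x := by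
      rw [map_sub, map_one, hcomp]
    rw [this, isUnit_iff_ne_zero, sub_ne_zero]
    exact ne_comm
  have hU1 : ∀ x : ZMod (p ^ m), π₁ x = 1 → IsUnit x := by
    intro x hx
    rw [csL3 p 1 m hp le_rfl hm x]
    rw [hπ₁] at hx
    rw [hx]
    exact isUnit_one
  -- the count
  have hcnt : ∀ c : ZMod (p ^ k),
      (((Finset.univ.filter fun x₂ : ZMod (p ^ m) => IsUnit x₂ ∧ πq x₂ = c).card : ℕ) : ℂ)
      = if IsUnit c then ((p ^ (m - k) : ℕ) : ℂ) else 0 := by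
    intro c
    by_cases hc : IsUnit c
    · rw [if_pos hc]
      congr 1
      have heq : (Finset.univ.filter fun x₂ : ZMod (p ^ m) => IsUnit x₂ ∧ πq x₂ = c)
          = Finset.univ.filter fun x₂ : ZMod (p ^ m) => πq x₂ = c := by
        apply Finset.filter_congr
        intro x₂ _
        constructor
        · exact fun h => h.2
        · intro h
          exact ⟨(csL3 p k m hp hk1 hkm x₂).mpr (h ▸ hc), h⟩
      rw [heq, hπq, csL2 (p ^ m) (p ^ k) hdq c, Nat.pow_div hkm hp.pos]
    · rw [if_neg hc]
      have heq : (Finset.univ.filter fun x₂ : ZMod (p ^ m) => IsUnit x₂ ∧ πq x₂ = c)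
          = ∅ := by
        rw [Finset.eq_empty_iff_forall_notMem]
        intro x₂ hx₂
        rw [Finset.mem_filter] at hx₂
        obtain ⟨-, hu, heq⟩ := hx₂
        exact hc (heq ▸ (csL3 p k m hp hk1 hkm x₂).mp hu)
      rw [heq]
      simp
  -- step 1: rewrite as a sum over ZMod (p ^ m)
  have step1 : (∑ a₁ ∈ (Finset.Icc 1 (p ^ m)).filter (fun a => Nat.gcd a (p ^ m) = 1),
      ∑ a₂ ∈ (Finset.Icc 1 (p ^ m)).filter
          (fun a₂ => Nat.gcd a₂ (p ^ m) = 1 ∧ a₁ + a₂ ≡ 1 [MOD p ^ k]),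
        χ (a₁ : ZMod (p ^ m)))
      = ∑ x₁ : ZMod (p ^ m), (if IsUnit x₁ then
          χ x₁ * (((Finset.univ.filter fun x₂ : ZMod (p ^ m) =>
            IsUnit x₂ ∧ πq x₂ = 1 - πq x₁).card : ℕ) : ℂ) else 0) := by
    rw [Finset.sum_filter, ← csL1 (p ^ m) (fun x₁ => if IsUnit x₁ then
          χ x₁ * (((Finset.univ.filter fun x₂ : ZMod (p ^ m) =>
            IsUnit x₂ ∧ πq x₂ = 1 - πq x₁).card : ℕ) : ℂ) else 0)]
    apply Finset.sum_congr rfl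
    intro a₁ _
    by_cases hg : Nat.gcd a₁ (p ^ m) = 1
    · have hu : IsUnit ((a₁ : ℕ) : ZMod (p ^ m)) := (ZMod.isUnit_iff_coprime a₁ (p ^ m)).mpr hg
      rw [if_pos hg, if_pos hu]
      have hiff : ∀ a₂ : ℕ, (Nat.gcd a₂ (p ^ m) = 1 ∧ a₁ + a₂ ≡ 1 [MOD p ^ k])
          ↔ (IsUnit ((a₂ : ℕ) : ZMod (p ^ m)) ∧
              πq ((a₂ : ℕ) : ZMod (p ^ m)) = 1 - πq ((a₁ : ℕ) : ZMod (p ^ m))) := by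
        intro a₂
        constructor
        · rintro ⟨h1, h2⟩
          refine ⟨(ZMod.isUnit_iff_coprime a₂ (p ^ m)).mpr h1, ?_⟩
          have h3 : ((a₁ + a₂ : ℕ) : ZMod (p ^ k)) = ((1 : ℕ) : ZMod (p ^ k)) :=
            (ZMod.natCast_eq_natCast_iff _ _ _).mpr h2
          push_cast at h3
          rw [eq_sub_iff_add_eq', hπq, map_natCast, map_natCast]
          exact h3
        · rintro ⟨h1, h2⟩
          refine ⟨(ZMod.isUnit_iff_coprime a₂ (p ^ m)).mp h1, ?_⟩
          rw [eq_sub_iff_add_eq', hπq, map_natCast, map_natCast] at h2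
          have h3 : ((a₁ + a₂ : ℕ) : ZMod (p ^ k)) = ((1 : ℕ) : ZMod (p ^ k)) := by
            push_cast
            exact h2
          exact (ZMod.natCast_eq_natCast_iff _ _ _).mp h3
      have hfe : (Finset.Icc 1 (p ^ m)).filter
            (fun a₂ => Nat.gcd a₂ (p ^ m) = 1 ∧ a₁ + a₂ ≡ 1 [MOD p ^ k])
          = (Finset.Icc 1 (p ^ m)).filter (fun a₂ => IsUnit ((a₂ : ℕ) : ZMod (p ^ m)) ∧
              πq ((a₂ : ℕ) : ZMod (p ^ m)) = 1 - πq ((a₁ : ℕ) : ZMod (p ^ m))) := by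
        apply Finset.filter_congr
        intro a₂ _
        exact hiff a₂
      rw [hfe, Finset.sum_filter,
        csL1 (p ^ m) (fun x₂ => if IsUnit x₂ ∧ πq x₂ = 1 - πq ((a₁ : ℕ) : ZMod (p ^ m))
          then χ ((a₁ : ℕ) : ZMod (p ^ m)) else 0),
        ← Finset.sum_filter, Finset.sum_const, nsmul_eq_mul, mul_comm]
    · rw [if_neg hg, if_neg (fun hu => hg ((ZMod.isUnit_iff_coprime a₁ (p ^ m)).mp hu))]
  rw [step1]
  -- step 2: simplify the summand
  have step2 : ∀ x₁ : ZMod (p ^ m), (if IsUnit x₁ then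
          χ x₁ * (((Finset.univ.filter fun x₂ : ZMod (p ^ m) =>
            IsUnit x₂ ∧ πq x₂ = 1 - πq x₁).card : ℕ) : ℂ) else 0)
      = ((p ^ (m - k) : ℕ) : ℂ) * (χ x₁ - if π₁ x₁ = 1 then χ x₁ else 0) := by
    intro x₁
    by_cases hu : IsUnit x₁
    · rw [if_pos hu, hcnt (1 - πq x₁)]
      by_cases h1 : π₁ x₁ = 1
      · rw [if_neg (fun hc => (hNU x₁).mp hc h1), if_pos h1]
        ring
      · rw [if_pos ((hNU x₁).mpr h1), if_neg h1]
        ring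
    · rw [if_neg hu, MulChar.map_nonunit χ hu,
        if_neg (fun h1 => hu (hU1 x₁ h1))]
      ring
  rw [Finset.sum_congr rfl (fun x₁ _ => step2 x₁), ← Finset.mul_sum]
  rw [Finset.sum_sub_distrib]
  -- now the two sums
  by_cases ht0 : t = 0
  · subst ht0
    have hχ1 : χ = 1 := by
      rw [DirichletCharacter.eq_one_iff_conductor_eq_one, hχ, pow_zero]
    have hA : ∑ x : ZMod (p ^ m), χ x = ((Nat.totient (p ^ m) : ℕ) : ℂ) := by
      rw [hχ1, MulChar.sum_one_eq_card_units, ZMod.card_units_eq_totient]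
    have hB : (∑ x : ZMod (p ^ m), if π₁ x = 1 then χ x else 0)
        = ((p ^ (m - 1) : ℕ) : ℂ) := by
      have : ∀ x : ZMod (p ^ m), (if π₁ x = 1 then χ x else 0)
          = (if π₁ x = 1 then (1 : ℂ) else 0) := by
        intro x
        by_cases h : π₁ x = 1
        · rw [if_pos h, if_pos h, csL5 p m 0 hp hm χ hχ (by omega) x h]
        · rw [if_neg h, if_neg h]
      rw [Finset.sum_congr rfl (fun x _ => this x), Finset.sum_boole, hπ₁,
        csL2 (p ^ m) (p ^ 1) hd1 1, Nat.pow_div hm hp.pos]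
    rw [hA, hB]
    rw [if_pos rfl]
    rw [Nat.totient_prime_pow hp (by omega)]
    have hpm : (p : ℂ) ^ m = (p : ℂ) ^ (m - 1) * p := by
      conv_lhs => rw [show m = (m - 1) + 1 by omega]
      rw [pow_succ]
    push_cast [Nat.cast_sub hp.one_lt.le]
    rw [hpm]
    ring
  · have hχne : χ ≠ 1 := by
      intro h1
      rw [DirichletCharacter.eq_one_iff_conductor_eq_one, hχ] at h1
      have : 1 < p ^ t := Nat.one_lt_pow ht0 hp.one_lt
      omega
    have hA : ∑ x : ZMod (p ^ m), χ x = 0 := MulChar.sum_eq_zero_of_ne_one hχne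
    rw [hA]
    by_cases ht1 : t = 1
    · subst ht1
      have hB : (∑ x : ZMod (p ^ m), if π₁ x = 1 then χ x else 0)
          = ((p ^ (m - 1) : ℕ) : ℂ) := by
        have : ∀ x : ZMod (p ^ m), (if π₁ x = 1 then χ x else 0)
            = (if π₁ x = 1 then (1 : ℂ) else 0) := by
          intro x
          by_cases h : π₁ x = 1
          · rw [if_pos h, if_pos h, csL5 p m 1 hp hm χ hχ le_rfl x h]
          · rw [if_neg h, if_neg h]
        rw [Finset.sum_congr rfl (fun x _ => this x), Finset.sum_boole, hπ₁,
          csL2 (p ^ m) (p ^ 1) hd1 1, Nat.pow_div hm hp.pos]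
      rw [hB, if_neg ht0, if_pos rfl]
      push_cast
      rw [zero_sub, mul_neg, ← pow_add]
      congr 2
      omega
    · -- t ≥ 2
      have ht2 : 2 ≤ t := by omega
      obtain ⟨x₀, hx₀1, hx₀χ⟩ := csL6 p m t hp hm χ hχ ht2
      have hx₀u : IsUnit x₀ := hU1 x₀ hx₀1
      have hB : (∑ x : ZMod (p ^ m), if π₁ x = 1 then χ x else 0) = 0 := by
        apply csL4 χ (fun x => π₁ x = 1) hx₀u.unit
        · intro x
          rw [hx₀u.unit_spec, map_mul, hx₀1, one_mul]
        · rw [hx₀u.unit_spec]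
          exact hx₀χ
      rw [hB, if_neg ht0, if_neg ht1]
      ring
end

section
/- Let p be a prime, m ≥ 1, and χ a Dirichlet character modulo p^m with conductor p^t. Then ∑ χ(a₁), summed over a₁, a₂ ∈ (ℤ/p^mℤ)* with a₁+a₂ and a₁+a₂-1 both units mod p^m, equals (p^m - p^{m-1})(p^m - 3p^{m-1}) + p^{2m-2} if t = 0, equals p^{2m-2} if t = 1, and equals 0 if t ≥ 2. -/
open Finset

private lemma sum_Icc_zmod {n : ℕ} (hn : 1 < n) [NeZero n] {M : Type*} [AddCommMonoid M]
    (P : ZMod n → Prop) [DecidablePred P] (f : ZMod n → M) :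
    ∑ a ∈ (Finset.Icc 1 n).filter (fun a : ℕ => P (a : ZMod n)), f (a : ZMod n)
      = ∑ x ∈ Finset.univ.filter P, f x := by
  refine Finset.sum_bij (fun a _ => (a : ZMod n)) ?_ ?_ ?_ ?_
  · intro a ha
    rw [Finset.mem_filter] at ha ⊢
    exact ⟨Finset.mem_univ _, ha.2⟩
  · intro a ha b hb h
    rw [Finset.mem_filter, Finset.mem_Icc] at ha hb
    obtain ⟨⟨ha1, ha2⟩, -⟩ := ha
    obtain ⟨⟨hb1, hb2⟩, -⟩ := hb
    rw [ZMod.natCast_eq_natCast_iff, Nat.ModEq] at h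
    rcases Nat.lt_or_ge a n with h1 | h1
    · rcases Nat.lt_or_ge b n with h2 | h2
      · rwa [Nat.mod_eq_of_lt h1, Nat.mod_eq_of_lt h2] at h
      · have hb' : b = n := le_antisymm hb2 h2
        rw [hb', Nat.mod_self, Nat.mod_eq_of_lt h1] at h
        omega
    · have ha' : a = n := le_antisymm ha2 h1
      rw [ha', Nat.mod_self] at h
      rcases Nat.lt_or_ge b n with h2 | h2
      · rw [Nat.mod_eq_of_lt h2] at h; omega
      · omega
  · intro x hx
    rw [Finset.mem_filter] at hx
    have hv : ((x.val : ℕ) : ZMod n) = x := ZMod.natCast_rightInverse x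
    by_cases h0 : x.val = 0
    · have hxn : ((n : ℕ) : ZMod n) = x := by
        rw [ZMod.natCast_self, ← hv, h0, Nat.cast_zero]
      refine ⟨n, ?_, hxn⟩
      rw [Finset.mem_filter, Finset.mem_Icc]
      exact ⟨⟨by omega, le_rfl⟩, by rw [hxn]; exact hx.2⟩
    · refine ⟨x.val, ?_, hv⟩
      rw [Finset.mem_filter, Finset.mem_Icc]
      exact ⟨⟨by omega, le_of_lt (ZMod.val_lt x)⟩, by rw [hv]; exact hx.2⟩
  · exact fun a _ => rfl

private lemma zmod_pow_isUnit_iff (p m : ℕ) (hp : p.Prime) (hm0 : m ≠ 0) (z : ZMod (p ^ m)) :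
    IsUnit z ↔ ZMod.castHom (dvd_pow_self p hm0) (ZMod p) z ≠ 0 := by
  haveI : NeZero (p ^ m) := ⟨pow_ne_zero m hp.pos.ne'⟩
  have h1 : z = ((z.val : ℕ) : ZMod (p ^ m)) := (ZMod.natCast_rightInverse z).symm
  have h2 : ZMod.castHom (dvd_pow_self p hm0) (ZMod p) z = ((z.val : ℕ) : ZMod p) := by
    conv_lhs => rw [h1]
    exact map_natCast _ z.val
  rw [h2, Ne, ZMod.natCast_eq_zero_iff]
  conv_lhs => rw [h1]
  rw [ZMod.isUnit_iff_coprime, Nat.coprime_pow_right_iff (by omega), Nat.coprime_comm]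
  exact hp.coprime_iff_not_dvd

private lemma zmod_fiber_card (p m : ℕ) (hp : p.Prime) (hm0 : m ≠ 0) [NeZero (p ^ m)] (c : ZMod p) :
    ((Finset.univ : Finset (ZMod (p ^ m))).filter
      (fun x => ZMod.castHom (dvd_pow_self p hm0) (ZMod p) x = c)).card
      = p ^ (m - 1) := by
  classical
  haveI : NeZero p := ⟨hp.pos.ne'⟩
  haveI : NeZero (p ^ m) := ⟨pow_ne_zero m hp.pos.ne'⟩
  set π := ZMod.castHom (dvd_pow_self p hm0) (ZMod p) with hπ
  have hsame : ∀ c₁ c₂ : ZMod p,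
      (Finset.univ.filter (fun x : ZMod (p ^ m) => π x = c₁)).card
        = (Finset.univ.filter (fun x : ZMod (p ^ m) => π x = c₂)).card := by
    intro c₁ c₂
    have hd : π (((c₂ - c₁).val : ℕ) : ZMod (p ^ m)) = c₂ - c₁ := by
      rw [map_natCast]
      exact ZMod.natCast_rightInverse _
    refine Finset.card_bij (fun x _ => x + (((c₂ - c₁).val : ℕ) : ZMod (p ^ m))) ?_ ?_ ?_
    · intro x hx
      rw [Finset.mem_filter] at hx ⊢
      refine ⟨Finset.mem_univ _, ?_⟩
      rw [map_add, hd, hx.2]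
      ring
    · intro a _ b _ h
      exact add_right_cancel h
    · intro y hy
      rw [Finset.mem_filter] at hy
      refine ⟨y - (((c₂ - c₁).val : ℕ) : ZMod (p ^ m)), ?_, by ring⟩
      rw [Finset.mem_filter]
      refine ⟨Finset.mem_univ _, ?_⟩
      rw [map_sub, hd, hy.2]
      ring
  have htot : p ^ m = ∑ c' : ZMod p,
      (Finset.univ.filter (fun x : ZMod (p ^ m) => π x = c')).card := by
    have := Finset.card_eq_sum_card_fiberwise
      (f := π) (s := (Finset.univ : Finset (ZMod (p ^ m)))) (t := Finset.univ)
      (fun x _ => Finset.mem_univ _)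
    rwa [Finset.card_univ, ZMod.card] at this
  rw [Finset.sum_congr rfl (fun c' _ => hsame c' c), Finset.sum_const, Finset.card_univ,
      ZMod.card, smul_eq_mul] at htot
  have hpow : p ^ m = p * p ^ (m - 1) := by
    conv_lhs => rw [show m = 1 + (m - 1) by omega, pow_add, pow_one]
  exact Nat.eq_of_mul_eq_mul_left hp.pos (htot.symm.trans hpow)

private lemma zmod_count_compl (p m : ℕ) (hp : p.Prime) (hm0 : m ≠ 0) [NeZero (p ^ m)] (S : Finset (ZMod p)) :
    ((Finset.univ : Finset (ZMod (p ^ m))).filter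
      (fun x => ZMod.castHom (dvd_pow_self p hm0) (ZMod p) x ∉ S)).card
      = (p - S.card) * p ^ (m - 1) := by
  classical
  haveI : NeZero p := ⟨hp.pos.ne'⟩
  set π := ZMod.castHom (dvd_pow_self p hm0) (ZMod p) with hπ
  have h1 := Finset.card_eq_sum_card_fiberwise (f := π)
    (s := Finset.univ.filter (fun x : ZMod (p ^ m) => π x ∉ S)) (t := Sᶜ)
    (fun x hx => by rw [Finset.mem_coe, Finset.mem_filter] at hx; exact Finset.mem_compl.mpr hx.2)
  rw [h1]
  have h2 : ∀ b ∈ Sᶜ, ((Finset.univ.filter (fun x : ZMod (p ^ m) => π x ∉ S)).filter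
      (fun x => π x = b)).card = p ^ (m - 1) := by
    intro b hb
    rw [Finset.mem_compl] at hb
    rw [Finset.filter_filter]
    have : (Finset.univ.filter (fun x : ZMod (p ^ m) => π x ∉ S ∧ π x = b))
        = Finset.univ.filter (fun x : ZMod (p ^ m) => π x = b) := by
      refine Finset.filter_congr fun x _ => ?_
      constructor
      · exact fun h => h.2
      · exact fun h => ⟨by rw [h]; exact hb, h⟩
    rw [this]
    exact zmod_fiber_card p m hp hm0 b
  rw [Finset.sum_congr rfl h2, Finset.sum_const, smul_eq_mul, Finset.card_compl,
      Fintype.card_eq_nat_card, Nat.card_zmod]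

/-- For a Dirichlet character `χ` mod `p^m` with conductor `p^t`, the sum of
`χ(a₁)` over pairs of units `a₁, a₂` mod `p^m` with `a₁+a₂` and `a₁+a₂-1`
both units equals `(p^m - p^{m-1})(p^m - 3p^{m-1}) + p^{2m-2}` if `t = 0`,
`p^{2m-2}` if `t = 1`, and `0` if `t ≥ 2`. -/
theorem char_sum_pairs_unit_conditions (p m t : ℕ) (hp : p.Prime) (hm : 1 ≤ m)
    (htm : t ≤ m) (χ : DirichletCharacter ℂ (p ^ m)) (hχ : χ.conductor = p ^ t) :
    ∑ a₁ ∈ (Finset.Icc 1 (p ^ m)).filter (fun a => Nat.gcd a (p ^ m) = 1),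
      ∑ a₂ ∈ (Finset.Icc 1 (p ^ m)).filter
          (fun a₂ => Nat.gcd a₂ (p ^ m) = 1 ∧ Nat.gcd (a₁ + a₂) (p ^ m) = 1 ∧
            Nat.gcd (a₁ + a₂ - 1) (p ^ m) = 1),
        χ (a₁ : ZMod (p ^ m))
      = if t = 0 then
          ((p : ℂ) ^ m - (p : ℂ) ^ (m - 1)) * ((p : ℂ) ^ m - 3 * (p : ℂ) ^ (m - 1))
            + (p : ℂ) ^ (2 * m - 2)
        else if t = 1 then (p : ℂ) ^ (2 * m - 2)
        else 0 := by
  classical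
  haveI hFact : Fact p.Prime := ⟨hp⟩
  haveI : NeZero p := ⟨hp.pos.ne'⟩
  haveI : NeZero (p ^ m) := ⟨pow_ne_zero m hp.pos.ne'⟩
  have hm0 : m ≠ 0 := by omega
  have hn1 : 1 < p ^ m := Nat.one_lt_pow hm0 hp.one_lt
  set π := ZMod.castHom (dvd_pow_self p hm0) (ZMod p) with hπdef
  have hunit : ∀ z : ZMod (p ^ m), IsUnit z ↔ π z ≠ 0 :=
    fun z => zmod_pow_isUnit_iff p m hp hm0 z
  have hfiber : ∀ c : ZMod p,
      ((Finset.univ : Finset (ZMod (p ^ m))).filter (fun x => π x = c)).card = p ^ (m - 1) :=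
    fun c => zmod_fiber_card p m hp hm0 c
  have hcompl : ∀ S : Finset (ZMod p),
      ((Finset.univ : Finset (ZMod (p ^ m))).filter (fun x => π x ∉ S)).card
        = (p - S.card) * p ^ (m - 1) :=
    fun S => zmod_count_compl p m hp hm0 S
  set N : ZMod (p ^ m) → ℕ := fun x =>
    ((Finset.univ : Finset (ZMod (p ^ m))).filter (fun y =>
      IsUnit y ∧ IsUnit (x + y) ∧ IsUnit (x + y - 1))).card with hNdef
  -- counting the inner set
  have hN2 : ∀ x : ZMod (p ^ m), π x = 1 → N x = (p - 2) * p ^ (m - 1) := by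
    intro x hx1
    have hfe : ((Finset.univ : Finset (ZMod (p ^ m))).filter (fun y =>
        IsUnit y ∧ IsUnit (x + y) ∧ IsUnit (x + y - 1)))
        = Finset.univ.filter (fun y : ZMod (p ^ m) =>
            π y ∉ ({0, -1} : Finset (ZMod p))) := by
      refine Finset.filter_congr fun y _ => ?_
      rw [hunit y, hunit (x + y), hunit (x + y - 1), map_add, map_sub, map_add, map_one, hx1]
      simp only [Finset.mem_insert, Finset.mem_singleton]
      constructor
      · rintro ⟨h1, h2, h3⟩ (h | h)
        · exact h1 h
        · exact h2 (by rw [h]; ring)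
      · intro h
        refine ⟨fun h' => h (Or.inl h'), fun h' => h (Or.inr (by linear_combination h')),
          fun h' => h (Or.inl (by linear_combination h'))⟩
    simp only [hNdef]
    rw [hfe, hcompl]
    have hc : ({0, -1} : Finset (ZMod p)).card = 2 := by
      have hne : (0 : ZMod p) ∉ ({-1} : Finset (ZMod p)) := by
        simp only [Finset.mem_singleton]
        intro h
        exact one_ne_zero (α := ZMod p) (by linear_combination h)
      rw [Finset.card_insert_of_notMem hne, Finset.card_singleton]
    rw [hc]
  have hN3 : ∀ x : ZMod (p ^ m), IsUnit x → π x ≠ 1 →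
      3 ≤ p ∧ N x = (p - 3) * p ^ (m - 1) := by
    intro x hxu hx1
    have hx0 : π x ≠ 0 := (hunit x).mp hxu
    have hScard : ({0, -π x, 1 - π x} : Finset (ZMod p)).card = 3 := by
      have hne1 : -π x ∉ ({1 - π x} : Finset (ZMod p)) := by
        simp only [Finset.mem_singleton]
        intro h
        exact one_ne_zero (α := ZMod p) (by linear_combination -h)
      have hne0 : (0 : ZMod p) ∉ ({-π x, 1 - π x} : Finset (ZMod p)) := by
        simp only [Finset.mem_insert, Finset.mem_singleton]
        rintro (h | h)
        · exact hx0 (by linear_combination h)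
        · exact hx1 (by linear_combination h)
      rw [Finset.card_insert_of_notMem hne0, Finset.card_insert_of_notMem hne1,
        Finset.card_singleton]
    refine ⟨?_, ?_⟩
    · have h1 := Finset.card_le_univ ({0, -π x, 1 - π x} : Finset (ZMod p))
      rwa [hScard, ZMod.card] at h1
    · have hfe : ((Finset.univ : Finset (ZMod (p ^ m))).filter (fun y =>
          IsUnit y ∧ IsUnit (x + y) ∧ IsUnit (x + y - 1)))
          = Finset.univ.filter (fun y : ZMod (p ^ m) =>
              π y ∉ ({0, -π x, 1 - π x} : Finset (ZMod p))) := by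
        refine Finset.filter_congr fun y _ => ?_
        rw [hunit y, hunit (x + y), hunit (x + y - 1), map_add, map_sub, map_add, map_one]
        simp only [Finset.mem_insert, Finset.mem_singleton]
        constructor
        · rintro ⟨h1, h2, h3⟩ (h | h | h)
          · exact h1 h
          · exact h2 (by rw [h]; ring)
          · exact h3 (by rw [h]; ring)
        · intro h
          exact ⟨fun h' => h (Or.inl h'),
            fun h' => h (Or.inr (Or.inl (by linear_combination h'))),
            fun h' => h (Or.inr (Or.inr (by linear_combination h')))⟩
      simp only [hNdef]
      rw [hfe, hcompl, hScard]
  -- the character sum over all units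
  have hAval : (∑ x ∈ Finset.univ.filter (fun x : ZMod (p ^ m) => IsUnit x), χ x)
      = if t = 0 then (((p - 1) * p ^ (m - 1) : ℕ) : ℂ) else 0 := by
    by_cases ht : t = 0
    · rw [if_pos ht]
      have hχ1 : χ = 1 :=
        (DirichletCharacter.eq_one_iff_conductor_eq_one).mpr
          (by rw [hχ, ht, pow_zero])
      have hone : ∀ x ∈ Finset.univ.filter (fun x : ZMod (p ^ m) => IsUnit x), χ x = 1 := by
        intro x hx
        rw [Finset.mem_filter] at hx
        rw [hχ1]
        exact MulChar.one_apply hx.2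
      rw [Finset.sum_congr rfl hone, Finset.sum_const, nsmul_eq_mul, mul_one]
      have hfeq : Finset.univ.filter (fun x : ZMod (p ^ m) => IsUnit x)
          = Finset.univ.filter (fun x : ZMod (p ^ m) => π x ∉ ({0} : Finset (ZMod p))) := by
        refine Finset.filter_congr fun x _ => ?_
        rw [hunit x]
        simp
      rw [hfeq, hcompl, Finset.card_singleton]
    · rw [if_neg ht]
      have hχne : χ ≠ 1 := by
        intro h
        rw [h, DirichletCharacter.conductor_one] at hχ
        have h2 : p ≤ p ^ t := Nat.le_self_pow (by omega) p
        have h3 := hp.two_le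
        omega
      have hext : (∑ x ∈ Finset.univ.filter (fun x : ZMod (p ^ m) => IsUnit x), χ x)
          = ∑ x : ZMod (p ^ m), χ x := by
        refine Finset.sum_subset (Finset.filter_subset _ _) ?_
        intro x _ hx
        refine χ.map_nonunit ?_
        simpa using hx
      rw [hext, MulChar.sum_eq_zero_of_ne_one hχne]
  -- the character sum over the kernel of reduction
  have hBval : (∑ x ∈ Finset.univ.filter (fun x : ZMod (p ^ m) => π x = 1), χ x)
      = if t ≤ 1 then ((p ^ (m - 1) : ℕ) : ℂ) else 0 := by
    by_cases ht : t ≤ 1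
    · rw [if_pos ht]
      have hdp : χ.conductor ∣ p := by
        rw [hχ]
        interval_cases t
        · simpa using one_dvd p
        · rw [pow_one]
      have hft : χ.FactorsThrough p := by
        obtain ⟨hd, χ₀, hχ₀⟩ := χ.factorsThrough_conductor
        exact ⟨dvd_pow_self p hm0, DirichletCharacter.changeLevel hdp χ₀, by
          exact hχ₀.trans (DirichletCharacter.changeLevel_trans χ₀ hdp (dvd_pow_self p hm0))⟩
      obtain ⟨hd', χ₁, hfac⟩ := hft
      have hval : ∀ x ∈ Finset.univ.filter (fun x : ZMod (p ^ m) => π x = 1), χ x = 1 := by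
        intro x hx
        rw [Finset.mem_filter] at hx
        have hxu : IsUnit x := (hunit x).mpr (by rw [hx.2]; exact one_ne_zero)
        have hx' : χ x = χ₁ (π x) := by
          conv_lhs => rw [hfac, ← hxu.unit_spec]
          rw [DirichletCharacter.changeLevel_eq_cast_of_dvd]
          rw [hxu.unit_spec, hπdef, ZMod.castHom_apply]
        rw [hx', hx.2, map_one]
      rw [Finset.sum_congr rfl hval, Finset.sum_const, nsmul_eq_mul, mul_one, hfiber]
    · rw [if_neg ht]
      push_neg at ht
      have hnft : ¬ χ.FactorsThrough p := by
        intro h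
        have hle : χ.conductor ≤ p := Nat.sInf_le h
        rw [hχ] at hle
        have h2 : p ^ 1 < p ^ t := Nat.pow_lt_pow_right hp.one_lt (by omega)
        rw [pow_one] at h2
        omega
      rw [DirichletCharacter.factorsThrough_iff_ker_unitsMap (dvd_pow_self p hm0)] at hnft
      rw [SetLike.le_def] at hnft
      push_neg at hnft
      obtain ⟨u, hu1, hu2⟩ := hnft
      rw [MonoidHom.mem_ker] at hu1 hu2
      have huπ : π (u : ZMod (p ^ m)) = 1 := by
        rw [hπdef]
        have := congrArg Units.val hu1
        simpa [ZMod.unitsMap] using this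
      have huχ : χ (u : ZMod (p ^ m)) ≠ 1 := by
        intro h
        exact hu2 (Units.ext (by rw [MulChar.coe_toUnitHom, Units.val_one]; exact h))
      set B := ∑ x ∈ Finset.univ.filter (fun x : ZMod (p ^ m) => π x = 1), χ x with hB
      have hmul : B * χ (u : ZMod (p ^ m)) = B := by
        rw [hB, Finset.sum_mul]
        have hc : ∀ x ∈ Finset.univ.filter (fun x : ZMod (p ^ m) => π x = 1),
            χ x * χ (u : ZMod (p ^ m)) = χ (x * (u : ZMod (p ^ m))) :=
          fun x _ => (map_mul χ x _).symm
        rw [Finset.sum_congr rfl hc]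
        refine Finset.sum_bij (fun x _ => x * (u : ZMod (p ^ m))) ?_ ?_ ?_ ?_
        · intro a ha
          rw [Finset.mem_filter] at ha ⊢
          exact ⟨Finset.mem_univ _, by rw [map_mul, ha.2, huπ, one_mul]⟩
        · intro a _ b _ h
          have := congrArg (fun z => z * ((u⁻¹ : (ZMod (p ^ m))ˣ) : ZMod (p ^ m))) h
          simpa [mul_assoc, Units.mul_inv] using this
        · intro y hy
          rw [Finset.mem_filter] at hy
          refine ⟨y * ((u⁻¹ : (ZMod (p ^ m))ˣ) : ZMod (p ^ m)), ?_, ?_⟩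
          · rw [Finset.mem_filter]
            refine ⟨Finset.mem_univ _, ?_⟩
            have hinv : π ((u⁻¹ : (ZMod (p ^ m))ˣ) : ZMod (p ^ m)) = 1 := by
              have h5 : π ((u⁻¹ : (ZMod (p ^ m))ˣ) : ZMod (p ^ m)) * π (u : ZMod (p ^ m))
                  = 1 := by
                rw [← map_mul, Units.inv_mul, map_one]
              rwa [huπ, mul_one] at h5
            rw [map_mul, hy.2, hinv, one_mul]
          · show y * ((u⁻¹ : (ZMod (p ^ m))ˣ) : ZMod (p ^ m)) * (u : ZMod (p ^ m)) = y
            rw [mul_assoc, Units.inv_mul, mul_one]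
        · exact fun a _ => rfl
      have hsub : B * (χ (u : ZMod (p ^ m)) - 1) = 0 := by
        rw [mul_sub, hmul, mul_one, sub_self]
      rcases mul_eq_zero.mp hsub with h | h
      · exact h
      · exact absurd (sub_eq_zero.mp h) huχ
  -- reduction of the double sum to a sum over units
  have hout : (Finset.Icc 1 (p ^ m)).filter (fun a : ℕ => Nat.gcd a (p ^ m) = 1)
      = (Finset.Icc 1 (p ^ m)).filter (fun a : ℕ => IsUnit ((a : ZMod (p ^ m)))) :=
    Finset.filter_congr fun a _ => (ZMod.isUnit_iff_coprime a (p ^ m)).symm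
  have step1 : ∀ a₁ ∈ (Finset.Icc 1 (p ^ m)).filter
      (fun a : ℕ => IsUnit ((a : ZMod (p ^ m)))),
      (∑ a₂ ∈ (Finset.Icc 1 (p ^ m)).filter
          (fun a₂ => Nat.gcd a₂ (p ^ m) = 1 ∧ Nat.gcd (a₁ + a₂) (p ^ m) = 1 ∧
            Nat.gcd (a₁ + a₂ - 1) (p ^ m) = 1),
        χ ((a₁ : ZMod (p ^ m))))
      = χ ((a₁ : ZMod (p ^ m))) * ((N ((a₁ : ZMod (p ^ m)))) : ℂ) := by
    intro a₁ ha₁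
    rw [Finset.mem_filter, Finset.mem_Icc] at ha₁
    have hfc : (Finset.Icc 1 (p ^ m)).filter
          (fun a₂ => Nat.gcd a₂ (p ^ m) = 1 ∧ Nat.gcd (a₁ + a₂) (p ^ m) = 1 ∧
            Nat.gcd (a₁ + a₂ - 1) (p ^ m) = 1)
        = (Finset.Icc 1 (p ^ m)).filter (fun a₂ : ℕ =>
            IsUnit ((a₂ : ZMod (p ^ m))) ∧
            IsUnit ((a₁ : ZMod (p ^ m)) + (a₂ : ZMod (p ^ m))) ∧
            IsUnit ((a₁ : ZMod (p ^ m)) + (a₂ : ZMod (p ^ m)) - 1)) := by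
      refine Finset.filter_congr fun a₂ ha₂ => ?_
      rw [Finset.mem_Icc] at ha₂
      have e1 : Nat.gcd a₂ (p ^ m) = 1 ↔ IsUnit ((a₂ : ZMod (p ^ m))) :=
        (ZMod.isUnit_iff_coprime a₂ (p ^ m)).symm
      have e2 : Nat.gcd (a₁ + a₂) (p ^ m) = 1 ↔
          IsUnit ((a₁ : ZMod (p ^ m)) + (a₂ : ZMod (p ^ m))) := by
        rw [← Nat.cast_add]
        exact (ZMod.isUnit_iff_coprime (a₁ + a₂) (p ^ m)).symm
      have e3 : Nat.gcd (a₁ + a₂ - 1) (p ^ m) = 1 ↔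
          IsUnit ((a₁ : ZMod (p ^ m)) + (a₂ : ZMod (p ^ m)) - 1) := by
        have hcast : ((a₁ + a₂ - 1 : ℕ) : ZMod (p ^ m))
            = (a₁ : ZMod (p ^ m)) + (a₂ : ZMod (p ^ m)) - 1 := by
          rw [Nat.cast_sub (by omega : 1 ≤ a₁ + a₂), Nat.cast_add, Nat.cast_one]
        rw [← hcast]
        exact (ZMod.isUnit_iff_coprime _ _).symm
      rw [e1, e2, e3]
    rw [hfc]
    refine (sum_Icc_zmod hn1 (fun y : ZMod (p ^ m) =>
      IsUnit y ∧ IsUnit ((a₁ : ZMod (p ^ m)) + y) ∧ IsUnit ((a₁ : ZMod (p ^ m)) + y - 1))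
      (fun _ => χ ((a₁ : ZMod (p ^ m))))).trans ?_
    rw [Finset.sum_const, nsmul_eq_mul, mul_comm]
  rw [hout]
  refine (Finset.sum_congr rfl step1).trans ?_
  refine (sum_Icc_zmod hn1 (fun x : ZMod (p ^ m) => IsUnit x)
      (fun x : ZMod (p ^ m) => χ x * ((N x) : ℂ))).trans ?_
  -- split the unit sum according to π x = 1
  have hffB : (Finset.univ.filter (fun x : ZMod (p ^ m) => IsUnit x)).filter
      (fun x => π x = 1) = Finset.univ.filter (fun x : ZMod (p ^ m) => π x = 1) := by
    rw [Finset.filter_filter]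
    refine Finset.filter_congr fun x _ => ?_
    constructor
    · exact fun h => h.2
    · exact fun h => ⟨(hunit x).mpr (by rw [h]; exact one_ne_zero), h⟩
  have hsplit := Finset.sum_filter_add_sum_filter_not
    (Finset.univ.filter (fun x : ZMod (p ^ m) => IsUnit x))
    (fun x => π x = 1) (fun x : ZMod (p ^ m) => χ x * ((N x) : ℂ))
  have hsplitχ := Finset.sum_filter_add_sum_filter_not
    (Finset.univ.filter (fun x : ZMod (p ^ m) => IsUnit x))
    (fun x => π x = 1) (fun x : ZMod (p ^ m) => χ x)
  have hsum1 : ∑ x ∈ (Finset.univ.filter (fun x : ZMod (p ^ m) => IsUnit x)).filter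
      (fun x => π x = 1), χ x * ((N x) : ℂ)
      = (∑ x ∈ Finset.univ.filter (fun x : ZMod (p ^ m) => π x = 1), χ x)
        * (((p - 2) * p ^ (m - 1) : ℕ) : ℂ) := by
    rw [hffB]
    have hcg : ∀ x ∈ Finset.univ.filter (fun x : ZMod (p ^ m) => π x = 1),
        χ x * ((N x) : ℂ) = χ x * (((p - 2) * p ^ (m - 1) : ℕ) : ℂ) := by
      intro x hx
      rw [Finset.mem_filter] at hx
      rw [hN2 x hx.2]
    rw [Finset.sum_congr rfl hcg, ← Finset.sum_mul]
  have hsum2 : ∑ x ∈ (Finset.univ.filter (fun x : ZMod (p ^ m) => IsUnit x)).filter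
      (fun x => ¬ π x = 1), χ x * ((N x) : ℂ)
      = (∑ x ∈ (Finset.univ.filter (fun x : ZMod (p ^ m) => IsUnit x)).filter
          (fun x => ¬ π x = 1), χ x) * (((p : ℂ) - 3) * ((p : ℂ)) ^ (m - 1)) := by
    have hcg : ∀ x ∈ (Finset.univ.filter (fun x : ZMod (p ^ m) => IsUnit x)).filter
        (fun x => ¬ π x = 1),
        χ x * ((N x) : ℂ) = χ x * (((p : ℂ) - 3) * ((p : ℂ)) ^ (m - 1)) := by
      intro x hx
      rw [Finset.mem_filter] at hx
      obtain ⟨hx', hx1⟩ := hx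
      rw [Finset.mem_filter] at hx'
      obtain ⟨h3p, hNx⟩ := hN3 x hx'.2 hx1
      rw [hNx]
      push_cast [Nat.cast_sub h3p]
      ring
    rw [Finset.sum_congr rfl hcg, ← Finset.sum_mul]
  have hsumχ2 : (∑ x ∈ (Finset.univ.filter (fun x : ZMod (p ^ m) => IsUnit x)).filter
      (fun x => ¬ π x = 1), χ x)
      = (∑ x ∈ Finset.univ.filter (fun x : ZMod (p ^ m) => IsUnit x), χ x)
        - (∑ x ∈ Finset.univ.filter (fun x : ZMod (p ^ m) => π x = 1), χ x) := by
    rw [eq_sub_iff_add_eq, ← hffB, add_comm]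
    exact hsplitχ
  rw [← hsplit, hsum1, hsum2, hsumχ2, hAval, hBval]
  obtain ⟨k, rfl⟩ : ∃ k, m = k + 1 := ⟨m - 1, by omega⟩
  have hm1 : k + 1 - 1 = k := by omega
  have hm2 : 2 * (k + 1) - 2 = 2 * k := by omega
  rw [hm1, hm2]
  have hpow1 : (p : ℂ) ^ (k + 1) = (p : ℂ) ^ k * (p : ℂ) := pow_succ _ _
  have hpow2 : (p : ℂ) ^ (2 * k) = ((p : ℂ) ^ k) * ((p : ℂ) ^ k) := by
    rw [two_mul, pow_add]
  by_cases ht0 : t = 0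
  · subst ht0
    rw [if_pos rfl, if_pos (show (0 : ℕ) ≤ 1 by norm_num), if_pos rfl]
    push_cast [Nat.cast_sub hp.two_le, Nat.cast_sub hp.one_le]
    ring
  · by_cases ht1 : t = 1
    · subst ht1
      rw [if_neg ht0, if_pos (le_refl 1), if_neg ht0, if_pos rfl]
      push_cast [Nat.cast_sub hp.two_le]
      ring
    · rw [if_neg ht0, if_neg (by omega : ¬ t ≤ 1), if_neg ht0, if_neg ht1]
      ring
end

section
/- Let p be a prime, m ≥ 1, χ a Dirichlet character mod p^m with conductor p^t, and 0 ≤ r ≤ m. Then ∑ gcd(a₁+a₂-1, p^r)·χ(a₁), summed over units a₁, a₂ mod p^m with a₁+a₂ a unit, equals (r+1)·φ₂(p^m) if t = 0, equals -r·φ(p^{2m-1}) if t = 1, and equals 0 if t ≥ 2. -/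
open Finset

lemma aux_sum_totient (p : ℕ) (hp : p.Prime) (r : ℕ) :
    ∑ k ∈ Finset.range (r+1), (p^k).totient = p^r := by
  induction r with
  | zero => simp
  | succ r ih =>
      rw [Finset.sum_range_succ, ih, Nat.totient_prime_pow hp (Nat.succ_pos r)]
      have h2 := hp.two_le
      have hr : r + 1 - 1 = r := rfl
      rw [hr, pow_succ]
      have h : p ^ r * (p - 1) = p ^ r * p - p ^ r * 1 := Nat.mul_sub _ _ _
      have h2' : p ^ r * 1 ≤ p ^ r * p := Nat.mul_le_mul_left _ (by omega)
      omega

lemma aux_gcd_eq_sum (p : ℕ) (hp : p.Prime) (r n : ℕ) :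
    Nat.gcd n (p^r) = ∑ k ∈ Finset.range (r+1), if p^k ∣ n then (p^k).totient else 0 := by
  induction r with
  | zero => simp
  | succ r ih =>
      rw [Finset.sum_range_succ]
      by_cases h : p^(r+1) ∣ n
      · rw [if_pos h]
        have hsum : ∑ k ∈ Finset.range (r+1), (if p^k ∣ n then (p^k).totient else 0)
            = ∑ k ∈ Finset.range (r+1), (p^k).totient := by
          apply Finset.sum_congr rfl
          intro k hk
          exact if_pos (dvd_trans
            (pow_dvd_pow p (Nat.le_succ_of_le (Nat.le_of_lt_succ (Finset.mem_range.mp hk)))) h)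
        rw [hsum, aux_sum_totient p hp, Nat.gcd_eq_right h,
          Nat.totient_prime_pow hp (Nat.succ_pos r)]
        have h2 := hp.two_le
        have hr : r + 1 - 1 = r := rfl
        rw [hr, pow_succ]
        have hh : p ^ r * (p - 1) = p ^ r * p - p ^ r * 1 := Nat.mul_sub _ _ _
        have h2' : p ^ r * 1 ≤ p ^ r * p := Nat.mul_le_mul_left _ (by omega)
        omega
      · rw [if_neg h, add_zero, ← ih]
        apply Nat.dvd_antisymm
        · obtain ⟨j, hj, hje⟩ := (Nat.dvd_prime_pow hp).mp (Nat.gcd_dvd_right n (p^(r+1)))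
          have hjr : j ≤ r := by
            by_contra hc
            have : j = r + 1 := by omega
            exact h (this ▸ hje ▸ Nat.gcd_dvd_left n (p^(r+1)))
          exact Nat.dvd_gcd (Nat.gcd_dvd_left n (p^(r+1))) (hje ▸ pow_dvd_pow p hjr)
        · exact Nat.dvd_gcd (Nat.gcd_dvd_left n (p^r))
            ((Nat.gcd_dvd_right n (p^r)).trans (pow_dvd_pow p (Nat.le_succ r)))

lemma aux_card_fiber (p m k d : ℕ) (hp : p.Prime) (hk : k ≤ m) (hd : d = p^k)
    (h : d ∣ p^m) (c : ZMod d) :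
    haveI : NeZero (p^m) := ⟨pow_ne_zero m hp.ne_zero⟩
    haveI : NeZero d := ⟨hd ▸ pow_ne_zero k hp.ne_zero⟩
    (Finset.univ.filter fun x : ZMod (p^m) =>
        ZMod.castHom h (ZMod d) x = c).card = p^(m-k) := by
  subst hd
  haveI : NeZero (p^m) := ⟨pow_ne_zero m hp.ne_zero⟩
  haveI : NeZero (p^k) := ⟨pow_ne_zero k hp.ne_zero⟩
  have hpk : 0 < p^k := Nat.pow_pos hp.pos
  have hmul : p^k * p^(m-k) = p^m := by
    rw [← pow_add]; congr 1; omega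
  have hkm : p^k ≤ p^m := Nat.pow_le_pow_right hp.pos hk
  have hcv : c.val < p^k := ZMod.val_lt c
  rw [show p^(m-k) = (Finset.range (p^(m-k))).card from (Finset.card_range _).symm]
  apply Finset.card_bij' (fun x _ => (x.val - c.val) / p^k)
      (fun t _ => ((c.val + p^k * t : ℕ) : ZMod (p^m)))
  · intro x hx
    simp only [Finset.mem_filter, Finset.mem_univ, true_and] at hx
    have hxv : x.val < p^m := ZMod.val_lt x
    refine Finset.mem_range.mpr ?_
    rw [Nat.div_lt_iff_lt_mul hpk]
    calc x.val - c.val ≤ x.val := Nat.sub_le _ _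
      _ < p^m := hxv
      _ = p^(m-k) * p^k := by rw [mul_comm]; exact hmul.symm
  · intro t ht
    simp only [Finset.mem_range] at ht
    simp only [Finset.mem_filter, Finset.mem_univ, true_and]
    rw [map_natCast, Nat.cast_add, Nat.cast_mul, ZMod.natCast_self, zero_mul, add_zero,
      ZMod.natCast_val, ZMod.cast_id]
  · intro x hx
    simp only [Finset.mem_filter, Finset.mem_univ, true_and] at hx
    have h1 : ((x.val : ℕ) : ZMod (p^k)) = c := by
      rw [ZMod.natCast_val, ← ZMod.castHom_apply (h := h)]; exact hx
    have hxc : x.val % p^k = c.val := by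
      have h2 := congrArg ZMod.val h1
      rwa [ZMod.val_natCast] at h2
    have hle : c.val ≤ x.val := hxc ▸ Nat.mod_le _ _
    have hdvd : x.val - c.val = p^k * (x.val / p^k) := by
      have := Nat.mod_add_div x.val (p^k)
      omega
    rw [hdvd, Nat.mul_div_cancel_left _ hpk]
    have heq : c.val + p^k * (x.val / p^k) = x.val := by omega
    rw [heq, ZMod.natCast_val, ZMod.cast_id]
  · intro t ht
    simp only [Finset.mem_range] at ht
    have h3 : p^k * t ≤ p^k * (p^(m-k) - 1) := Nat.mul_le_mul_left _ (by omega)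
    have h2 : p^k * (p^(m-k) - 1) = p^m - p^k := by
      rw [Nat.mul_sub, hmul, mul_one]
    have hlt : c.val + p^k * t < p^m := by omega
    rw [ZMod.val_cast_of_lt hlt, Nat.add_sub_cancel_left, Nat.mul_div_cancel_left _ hpk]

lemma aux_card_pred (p m k d : ℕ) (hp : p.Prime) (hk : k ≤ m) (hd : d = p^k) (h : d ∣ p^m)
    (P : ZMod d → Prop) [DecidablePred P] :
    haveI : NeZero (p^m) := ⟨pow_ne_zero m hp.ne_zero⟩
    haveI : NeZero d := ⟨hd ▸ pow_ne_zero k hp.ne_zero⟩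
    (Finset.univ.filter fun x : ZMod (p^m) =>
        P (ZMod.castHom h (ZMod d) x)).card
      = p^(m-k) * (Finset.univ.filter P).card := by
  haveI : NeZero (p^m) := ⟨pow_ne_zero m hp.ne_zero⟩
  haveI : NeZero d := ⟨hd ▸ pow_ne_zero k hp.ne_zero⟩
  rw [Finset.card_eq_sum_card_fiberwise
    (f := fun x : ZMod (p^m) => ZMod.castHom h (ZMod d) x)
    (t := Finset.univ.filter P)
    (fun x hx => by
      simp only [Finset.mem_coe, Finset.mem_filter, Finset.mem_univ, true_and] at hx ⊢; exact hx)]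
  rw [Finset.sum_congr rfl (fun c hc => ?_), Finset.sum_const, smul_eq_mul, mul_comm]
  have hc' : P c := by simpa using hc
  rw [Finset.filter_filter]
  rw [Finset.filter_congr (q := fun x : ZMod (p^m) => ZMod.castHom h (ZMod d) x = c)
    (fun x _ => ⟨fun hx => hx.2, fun hx => ⟨hx ▸ hc', hx⟩⟩)]
  exact aux_card_fiber p m k d hp hk hd h c

lemma aux_isUnit_iff (p m : ℕ) (hp : p.Prime) (hm : 1 ≤ m) (h : p ∣ p^m)
    (x : ZMod (p^m)) :
    haveI : NeZero (p^m) := ⟨pow_ne_zero m hp.ne_zero⟩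
    (IsUnit x ↔ ZMod.castHom h (ZMod p) x ≠ 0) := by
  haveI : NeZero (p^m) := ⟨pow_ne_zero m hp.ne_zero⟩
  haveI : NeZero p := ⟨hp.ne_zero⟩
  have h1 : ZMod.castHom h (ZMod p) x = ((x.val : ℕ) : ZMod p) := by
    rw [ZMod.natCast_val, ZMod.castHom_apply]
  rw [h1, Ne, ZMod.natCast_eq_zero_iff]
  have h2 : x = ((x.val : ℕ) : ZMod (p^m)) := by rw [ZMod.natCast_val, ZMod.cast_id]
  rw [h2, ZMod.isUnit_iff_coprime]
  rw [Nat.coprime_pow_right_iff (by omega)]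
  rw [Nat.coprime_comm]
  rw [Nat.Prime.coprime_iff_not_dvd hp]
  rw [ZMod.val_natCast_of_lt (by rw [← h2] at *; exact ZMod.val_lt x)]

lemma aux_sum_Icc (p m : ℕ) (hp : p.Prime) (hm : 1 ≤ m) (h : p ∣ p^m)
    {M : Type*} [AddCommMonoid M] (F : ZMod (p^m) → M) :
    haveI : NeZero (p^m) := ⟨pow_ne_zero m hp.ne_zero⟩
    ∑ a ∈ (Finset.Icc 1 (p^m)).filter (fun a => Nat.gcd a (p^m) = 1), F ((a : ℕ) : ZMod (p^m))
      = ∑ z ∈ Finset.univ.filter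
          (fun z : ZMod (p^m) => ZMod.castHom h (ZMod p) z ≠ 0), F z := by
  haveI : NeZero (p^m) := ⟨pow_ne_zero m hp.ne_zero⟩
  have hN : 1 < p^m := Nat.one_lt_pow (by omega) hp.one_lt
  apply Finset.sum_nbij' (i := fun a => ((a : ℕ) : ZMod (p^m))) (j := ZMod.val)
  · intro a ha
    simp only [Finset.mem_filter, Finset.mem_Icc] at ha
    simp only [Finset.mem_filter, Finset.mem_univ, true_and]
    rw [← aux_isUnit_iff p m hp hm h]
    exact (ZMod.isUnit_iff_coprime a (p^m)).mpr ha.2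
  · intro z hz
    simp only [Finset.mem_filter, Finset.mem_univ, true_and] at hz
    rw [← aux_isUnit_iff p m hp hm h] at hz
    simp only [Finset.mem_filter, Finset.mem_Icc]
    have hu : IsUnit ((z.val : ℕ) : ZMod (p^m)) := by
      rwa [ZMod.natCast_val, ZMod.cast_id]
    have hcop := (ZMod.isUnit_iff_coprime _ _).mp hu
    refine ⟨⟨?_, le_of_lt (ZMod.val_lt z)⟩, hcop⟩
    rcases Nat.eq_zero_or_pos z.val with h0 | h1
    · exfalso
      have : z = 0 := by
        have := congrArg (fun v : ℕ => ((v : ℕ) : ZMod (p^m))) h0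
        simpa [ZMod.natCast_val, ZMod.cast_id] using this
      rw [this] at hz
      haveI : Fact (1 < p^m) := ⟨hN⟩
      exact not_isUnit_zero hz
    · exact h1
  · intro a ha
    simp only [Finset.mem_filter, Finset.mem_Icc] at ha
    have halt : a < p^m := by
      rcases Nat.lt_or_ge a (p^m) with h' | h'
      · exact h'
      · exfalso
        have : a = p^m := by omega
        rw [this] at ha
        simp [Nat.gcd_self] at ha
        have := hp.one_lt
        omega
    exact ZMod.val_cast_of_lt halt
  · intro z hz
    rw [ZMod.natCast_val, ZMod.cast_id]
  · intro a ha
    rfl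

lemma aux_card_units (p m : ℕ) (hp : p.Prime) (hm : 1 ≤ m) (h : p ∣ p^m) :
    haveI : NeZero (p^m) := ⟨pow_ne_zero m hp.ne_zero⟩
    (Finset.univ.filter
        (fun z : ZMod (p^m) => ZMod.castHom h (ZMod p) z ≠ 0)).card
      = p^(m-1) * (p-1) := by
  haveI : NeZero (p^m) := ⟨pow_ne_zero m hp.ne_zero⟩
  haveI : NeZero p := ⟨hp.ne_zero⟩
  have h1 : (Finset.univ.filter (fun c : ZMod p => c ≠ 0)).card = p - 1 := by
    rw [Finset.filter_ne', Finset.card_erase_of_mem (Finset.mem_univ _), Finset.card_univ,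
      ZMod.card p]
  calc (Finset.univ.filter
        (fun z : ZMod (p^m) => ZMod.castHom h (ZMod p) z ≠ 0)).card
      = p^(m-1) * (Finset.univ.filter (fun c : ZMod p => c ≠ 0)).card :=
        aux_card_pred p m 1 p hp hm (pow_one p).symm h (fun c => c ≠ 0)
    _ = p^(m-1) * (p-1) := by rw [h1]

lemma aux_card_ker (p m : ℕ) (hp : p.Prime) (hm : 1 ≤ m) (h : p ∣ p^m) :
    haveI : NeZero (p^m) := ⟨pow_ne_zero m hp.ne_zero⟩
    (Finset.univ.filter
        (fun z : ZMod (p^m) => ZMod.castHom h (ZMod p) z = 1)).card = p^(m-1) := by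
  haveI : NeZero (p^m) := ⟨pow_ne_zero m hp.ne_zero⟩
  haveI : NeZero p := ⟨hp.ne_zero⟩
  have h1 : (Finset.univ.filter (fun c : ZMod p => c = 1)).card = 1 := by
    rw [Finset.filter_eq', if_pos (Finset.mem_univ _), Finset.card_singleton]
  calc (Finset.univ.filter
        (fun z : ZMod (p^m) => ZMod.castHom h (ZMod p) z = 1)).card
      = p^(m-1) * (Finset.univ.filter (fun c : ZMod p => c = 1)).card :=
        aux_card_pred p m 1 p hp hm (pow_one p).symm h (fun c => c = 1)
    _ = p^(m-1) := by rw [h1, mul_one]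

lemma aux_sum_units_ne (p m : ℕ) (hp : p.Prime) (hm : 1 ≤ m) (h : p ∣ p^m)
    (χ : DirichletCharacter ℂ (p^m)) (hχ : χ ≠ 1) :
    haveI : NeZero (p^m) := ⟨pow_ne_zero m hp.ne_zero⟩
    ∑ z ∈ Finset.univ.filter
        (fun z : ZMod (p^m) => ZMod.castHom h (ZMod p) z ≠ 0), χ z = 0 := by
  haveI : NeZero (p^m) := ⟨pow_ne_zero m hp.ne_zero⟩
  rw [← MulChar.sum_eq_zero_of_ne_one hχ]
  apply Finset.sum_filter_of_ne
  intro x _ hx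
  rw [← aux_isUnit_iff p m hp hm h]
  by_contra hu
  exact hx (MulChar.map_nonunit χ hu)

lemma aux_sum_units_one (p m : ℕ) (hp : p.Prime) (hm : 1 ≤ m) (h : p ∣ p^m) :
    haveI : NeZero (p^m) := ⟨pow_ne_zero m hp.ne_zero⟩
    ∑ z ∈ Finset.univ.filter
        (fun z : ZMod (p^m) => ZMod.castHom h (ZMod p) z ≠ 0),
          (1 : DirichletCharacter ℂ (p^m)) z = ((p^(m-1) * (p-1) : ℕ) : ℂ) := by
  haveI : NeZero (p^m) := ⟨pow_ne_zero m hp.ne_zero⟩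
  rw [Finset.sum_congr rfl (fun z hz => ?_), Finset.sum_const, nsmul_eq_mul, mul_one]
  · rw [← aux_card_units p m hp hm h]
  · have hu : IsUnit z := by
      rw [aux_isUnit_iff p m hp hm h]
      exact (Finset.mem_filter.mp hz).2
    exact MulChar.one_apply hu

-- χ factors through p: sum over kernel is its cardinality
lemma aux_sum_ker_one (p m : ℕ) (hp : p.Prime) (hm : 1 ≤ m) (h : p ∣ p^m)
    (χ : DirichletCharacter ℂ (p^m)) (hf : χ.FactorsThrough p) :
    haveI : NeZero (p^m) := ⟨pow_ne_zero m hp.ne_zero⟩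
    ∑ z ∈ Finset.univ.filter
        (fun z : ZMod (p^m) => ZMod.castHom h (ZMod p) z = 1), χ z
      = ((p^(m-1) : ℕ) : ℂ) := by
  haveI : NeZero (p^m) := ⟨pow_ne_zero m hp.ne_zero⟩
  haveI : NeZero p := ⟨hp.ne_zero⟩
  haveI : Fact p.Prime := ⟨hp⟩
  rw [Finset.sum_congr rfl (fun z hz => ?_), Finset.sum_const, nsmul_eq_mul, mul_one]
  · rw [← aux_card_ker p m hp hm h]
  · simp only [Finset.mem_filter, Finset.mem_univ, true_and] at hz
    have hu : IsUnit z := by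
      rw [aux_isUnit_iff p m hp hm h, hz]
      exact one_ne_zero
    have hker := (DirichletCharacter.factorsThrough_iff_ker_unitsMap h).mp hf
    have hmem : hu.unit ∈ (ZMod.unitsMap h).ker := by
      rw [MonoidHom.mem_ker]
      ext
      rw [ZMod.unitsMap_def]
      rw [Units.coe_map]
      simp only [MonoidHom.coe_coe, IsUnit.unit_spec, Units.val_one]
      exact hz
    have := hker hmem
    rw [MonoidHom.mem_ker] at this
    have := congrArg (Units.val) this
    rw [MulChar.coe_toUnitHom, IsUnit.unit_spec, Units.val_one] at this
    exact this

-- χ does not factor through p: sum over kernel is zero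
lemma aux_sum_ker_zero (p m : ℕ) (hp : p.Prime) (hm : 1 ≤ m) (h : p ∣ p^m)
    (χ : DirichletCharacter ℂ (p^m)) (hf : ¬ χ.FactorsThrough p) :
    haveI : NeZero (p^m) := ⟨pow_ne_zero m hp.ne_zero⟩
    ∑ z ∈ Finset.univ.filter
        (fun z : ZMod (p^m) => ZMod.castHom h (ZMod p) z = 1), χ z = 0 := by
  haveI : NeZero (p^m) := ⟨pow_ne_zero m hp.ne_zero⟩
  haveI : NeZero p := ⟨hp.ne_zero⟩
  rw [DirichletCharacter.factorsThrough_iff_ker_unitsMap h] at hf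
  rw [SetLike.not_le_iff_exists] at hf
  obtain ⟨u, hu1, hu2⟩ := hf
  rw [MonoidHom.mem_ker] at hu1
  rw [MonoidHom.mem_ker] at hu2
  -- facts about z₀ := ↑u
  have hπu : ZMod.castHom h (ZMod p) (u : ZMod (p^m)) = 1 := by
    have := congrArg Units.val hu1
    rw [ZMod.unitsMap_def, Units.coe_map, Units.val_one] at this
    exact this
  have hχu : χ (u : ZMod (p^m)) ≠ 1 := by
    intro hc
    apply hu2
    ext
    rw [MulChar.coe_toUnitHom, Units.val_one]
    exact hc
  -- translation invariance
  set S := ∑ z ∈ Finset.univ.filter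
      (fun z : ZMod (p^m) => ZMod.castHom h (ZMod p) z = 1), χ z with hS
  have htrans : χ (u : ZMod (p^m)) * S = S := by
    rw [hS, Finset.mul_sum]
    apply Finset.sum_nbij' (i := fun z => (u : ZMod (p^m)) * z)
        (j := fun z => ((u⁻¹ : (ZMod (p^m))ˣ) : ZMod (p^m)) * z)
    · intro z hz
      simp only [Finset.mem_filter, Finset.mem_univ, true_and] at hz ⊢
      rw [map_mul, hπu, hz, mul_one]
    · intro z hz
      simp only [Finset.mem_filter, Finset.mem_univ, true_and] at hz ⊢
      have hπui : ZMod.castHom h (ZMod p) ((u⁻¹ : (ZMod (p^m))ˣ) : ZMod (p^m)) = 1 := by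
        have h1 : ((u : ZMod (p^m)) * ((u⁻¹ : (ZMod (p^m))ˣ) : ZMod (p^m))) = 1 := by
          rw [← Units.val_mul, mul_inv_cancel, Units.val_one]
        have := congrArg (ZMod.castHom h (ZMod p)) h1
        rw [map_mul, hπu, one_mul, map_one] at this
        exact this
      rw [map_mul, hπui, hz, mul_one]
    · intro z hz
      rw [← mul_assoc, ← Units.val_mul, inv_mul_cancel, Units.val_one, one_mul]
    · intro z hz
      rw [← mul_assoc, ← Units.val_mul, mul_inv_cancel, Units.val_one, one_mul]
    · intro z hz
      exact (map_mul χ _ _).symm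
  have : (χ (u : ZMod (p^m)) - 1) * S = 0 := by
    rw [sub_mul, one_mul, htrans, sub_self]
  rcases mul_eq_zero.mp this with hc | hc
  · exact absurd (sub_eq_zero.mp hc) hχu
  · exact hc

lemma aux_count0 (p m : ℕ) (hp : p.Prime) (hm : 1 ≤ m) (h1 : p ∣ p^m)
    (z₁ : ZMod (p^m)) (hz₁ : ZMod.castHom h1 (ZMod p) z₁ ≠ 0) :
    haveI : NeZero (p^m) := ⟨pow_ne_zero m hp.ne_zero⟩
    (Finset.univ.filter fun z₂ : ZMod (p^m) =>
        ZMod.castHom h1 (ZMod p) z₂ ≠ 0 ∧ ZMod.castHom h1 (ZMod p) (z₁ + z₂) ≠ 0).card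
      = p^(m-1) * (p - 2) := by
  haveI : NeZero (p^m) := ⟨pow_ne_zero m hp.ne_zero⟩
  haveI : NeZero p := ⟨hp.ne_zero⟩
  set e := ZMod.castHom h1 (ZMod p) z₁ with he
  rw [Finset.filter_congr (q := fun z₂ : ZMod (p^m) =>
      (fun c : ZMod p => c ≠ 0 ∧ e + c ≠ 0) (ZMod.castHom h1 (ZMod p) z₂))
    (fun z₂ _ => by rw [map_add])]
  rw [aux_card_pred p m 1 p hp hm (pow_one p).symm h1 (fun c => c ≠ 0 ∧ e + c ≠ 0)]
  congr 1
  -- card over ZMod p equals p - 2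
  have hsplit := Finset.card_filter_add_card_filter_not
    (s := (Finset.univ : Finset (ZMod p))) (p := fun c => c = 0 ∨ e + c = 0)
  have hor : (Finset.univ.filter (fun c : ZMod p => c = 0 ∨ e + c = 0))
      = ({0, -e} : Finset (ZMod p)) := by
    ext c
    simp only [Finset.mem_filter, Finset.mem_univ, true_and, Finset.mem_insert,
      Finset.mem_singleton]
    constructor
    · rintro (hc | hc)
      · exact Or.inl hc
      · right
        linear_combination hc
    · rintro (hc | hc)
      · exact Or.inl hc
      · right
        rw [hc]; ring
  have hcard2 : ({0, -e} : Finset (ZMod p)).card = 2 := by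
    rw [Finset.card_insert_of_notMem (by
      simp only [Finset.mem_singleton]
      intro hc
      exact hz₁ (by rw [he] at *; exact neg_eq_zero.mp hc.symm ▸ rfl)), Finset.card_singleton]
  rw [Finset.filter_congr (q := fun c : ZMod p => ¬ (c = 0 ∨ e + c = 0))
    (fun c _ => by constructor
                   · rintro ⟨hc1, hc2⟩ (hc | hc) <;> [exact hc1 hc; exact hc2 hc]
                   · intro hc; exact ⟨fun h' => hc (Or.inl h'), fun h' => hc (Or.inr h')⟩)]
  rw [hor, hcard2] at hsplit
  rw [Finset.card_univ, ZMod.card p] at hsplit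
  omega

lemma aux_countk (p m k : ℕ) (hp : p.Prime) (hm : 1 ≤ m) (hk1 : 1 ≤ k) (hk : k ≤ m)
    (h1 : p ∣ p^m) (z₁ : ZMod (p^m)) :
    haveI : NeZero (p^m) := ⟨pow_ne_zero m hp.ne_zero⟩
    (Finset.univ.filter fun z₂ : ZMod (p^m) =>
        (ZMod.castHom h1 (ZMod p) z₂ ≠ 0 ∧ ZMod.castHom h1 (ZMod p) (z₁ + z₂) ≠ 0)
          ∧ p^k ∣ (z₁ + z₂ - 1).val).card
      = if ZMod.castHom h1 (ZMod p) z₁ = 1 then 0 else p^(m-k) := by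
  haveI : NeZero (p^m) := ⟨pow_ne_zero m hp.ne_zero⟩
  haveI : NeZero p := ⟨hp.ne_zero⟩
  haveI : NeZero (p^k) := ⟨pow_ne_zero k hp.ne_zero⟩
  haveI : Fact p.Prime := ⟨hp⟩
  have hkm : p^k ∣ p^m := pow_dvd_pow p hk
  have hp1k : p ∣ p^k := dvd_pow_self p (by omega)
  set πk := ZMod.castHom hkm (ZMod (p^k)) with hπk
  have hcomp : ∀ w : ZMod (p^m),
      ZMod.castHom h1 (ZMod p) w = ZMod.castHom hp1k (ZMod p) (πk w) := by
    intro w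
    have := DFunLike.congr_fun (ZMod.castHom_comp hp1k hkm) w
    rw [RingHom.comp_apply] at this
    exact this.symm
  have ha : ∀ w : ZMod (p^m), (p^k ∣ w.val ↔ πk w = 0) := by
    intro w
    rw [show πk w = ((w.val : ℕ) : ZMod (p^k)) from by
      rw [ZMod.natCast_val, hπk, ZMod.castHom_apply]]
    rw [ZMod.natCast_eq_zero_iff]
  by_cases hz : ZMod.castHom h1 (ZMod p) z₁ = 1
  · rw [if_pos hz]
    rw [Finset.card_eq_zero, Finset.filter_eq_empty_iff]
    rintro z₂ - ⟨⟨hu2, -⟩, hdvd⟩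
    rw [ha] at hdvd
    have h0 : ZMod.castHom h1 (ZMod p) (z₁ + z₂ - 1) = 0 := by
      rw [hcomp, hdvd, map_zero]
    rw [map_sub, map_add, map_one, hz] at h0
    have : ZMod.castHom h1 (ZMod p) z₂ = 0 := by linear_combination h0
    exact hu2 this
  · rw [if_neg hz]
    rw [Finset.filter_congr (q := fun z₂ : ZMod (p^m) => πk z₂ = 1 - πk z₁)
      (fun z₂ _ => ?_)]
    · exact aux_card_fiber p m k (p^k) hp hk rfl hkm _
    constructor
    · rintro ⟨-, hdvd⟩
      rw [ha] at hdvd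
      rw [map_sub, map_add, map_one] at hdvd
      linear_combination hdvd
    · intro hz₂
      have hπ2 : ZMod.castHom h1 (ZMod p) z₂ = 1 - ZMod.castHom h1 (ZMod p) z₁ := by
        rw [hcomp z₂, hz₂, map_sub, map_one, ← hcomp z₁]
      refine ⟨⟨?_, ?_⟩, ?_⟩
      · rw [hπ2]
        exact sub_ne_zero.mpr (Ne.symm hz)
      · rw [map_add, hπ2]
        simpa using (one_ne_zero : (1 : ZMod p) ≠ 0)
      · rw [ha, map_sub, map_add, map_one, hz₂]
        ring

-- value compatibility for the gcd weight
lemma aux_gcd_val (p m r : ℕ) (hp : p.Prime) (hm : 1 ≤ m) (hrm : r ≤ m)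
    (a b : ℕ) (ha : 1 ≤ a) (hb : 1 ≤ b) :
    haveI : NeZero (p^m) := ⟨pow_ne_zero m hp.ne_zero⟩
    Nat.gcd (a + b - 1) (p^r)
      = Nat.gcd (((a : ZMod (p^m)) + (b : ZMod (p^m)) - 1).val) (p^r) := by
  haveI : NeZero (p^m) := ⟨pow_ne_zero m hp.ne_zero⟩
  have hcast : ((a : ZMod (p^m)) + (b : ZMod (p^m)) - 1) = ((a + b - 1 : ℕ) : ZMod (p^m)) := by
    have h1 : 1 ≤ a + b := by omega
    push_cast [Nat.cast_sub h1]
    ring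
  rw [hcast, ZMod.val_natCast]
  have hmod : (a + b - 1) % (p^m) ≡ (a + b - 1) [MOD p^r] :=
    (Nat.mod_modEq (a+b-1) (p^m)).of_dvd (pow_dvd_pow p hrm)
  exact (Nat.ModEq.gcd_eq hmod).symm

-- FactorsThrough is monotone under divisibility
lemma aux_ft_mono (n d e : ℕ) [NeZero n] (χ : DirichletCharacter ℂ n)
    (hde : d ∣ e) (hen : e ∣ n) (hf : χ.FactorsThrough d) : χ.FactorsThrough e := by
  rw [DirichletCharacter.factorsThrough_iff_ker_unitsMap hen]
  rw [DirichletCharacter.factorsThrough_iff_ker_unitsMap (dvd_trans hde hen)] at hf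
  intro u hu
  apply hf
  rw [MonoidHom.mem_ker] at hu ⊢
  have := DFunLike.congr_fun (ZMod.unitsMap_comp hde hen) u
  rw [MonoidHom.comp_apply] at this
  rw [← this, hu, map_one]

-- inner sum conversion
lemma aux_inner (p m : ℕ) (hp : p.Prime) (hm : 1 ≤ m) (h1 : p ∣ p^m)
    {M : Type*} [AddCommMonoid M] (a₁ : ℕ) (ha₁ : 1 ≤ a₁)
    (Φ : ℕ → M) (Ψ : ZMod (p^m) → M)
    (hcompat : ∀ a₂, 1 ≤ a₂ → a₂ ≤ p^m → Φ a₂ = Ψ ((a₂ : ℕ) : ZMod (p^m))) :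
    haveI : NeZero (p^m) := ⟨pow_ne_zero m hp.ne_zero⟩
    ∑ a₂ ∈ (Finset.Icc 1 (p^m)).filter
        (fun a₂ => Nat.gcd a₂ (p^m) = 1 ∧ Nat.gcd (a₁+a₂) (p^m) = 1), Φ a₂
      = ∑ z₂ ∈ Finset.univ.filter (fun z₂ : ZMod (p^m) =>
          ZMod.castHom h1 (ZMod p) z₂ ≠ 0
            ∧ ZMod.castHom h1 (ZMod p) ((a₁ : ZMod (p^m)) + z₂) ≠ 0), Ψ z₂ := by
  haveI : NeZero (p^m) := ⟨pow_ne_zero m hp.ne_zero⟩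
  rw [← Finset.filter_filter, Finset.sum_filter]
  rw [Finset.sum_congr rfl (fun a₂ ha₂ => ?_), aux_sum_Icc p m hp hm h1
    (F := fun z₂ => if ZMod.castHom h1 (ZMod p) ((a₁ : ZMod (p^m)) + z₂) ≠ 0
      then Ψ z₂ else 0)]
  · rw [← Finset.sum_filter, Finset.filter_filter]
  · -- summand conversion
    simp only [Finset.mem_filter, Finset.mem_Icc] at ha₂
    have hcond : Nat.gcd (a₁+a₂) (p^m) = 1
        ↔ ZMod.castHom h1 (ZMod p) ((a₁ : ZMod (p^m)) + (a₂ : ZMod (p^m))) ≠ 0 := by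
      rw [← aux_isUnit_iff p m hp hm h1]
      rw [show ((a₁ : ZMod (p^m)) + (a₂ : ZMod (p^m))) = (((a₁ + a₂ : ℕ)) : ZMod (p^m)) from by
        push_cast; ring]
      exact (ZMod.isUnit_iff_coprime (a₁+a₂) (p^m)).symm
    by_cases hc : Nat.gcd (a₁+a₂) (p^m) = 1
    · rw [if_pos hc, if_pos (hcond.mp hc), hcompat a₂ ha₂.1.1 ha₂.1.2]
    · rw [if_neg hc, if_neg (fun hcc => hc (hcond.mpr hcc))]

lemma aux_phi2 (p m : ℕ) (hp : p.Prime) (hm : 1 ≤ m) (h1 : p ∣ p^m) :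
    phi2 (p^m) = (p^(m-1) * (p-1)) * (p^(m-1) * (p-2)) := by
  haveI : NeZero (p^m) := ⟨pow_ne_zero m hp.ne_zero⟩
  rw [phi2, Finset.card_filter, Finset.sum_product]
  have hstep : ∀ a₁ ∈ Finset.Icc 1 (p^m),
      (∑ a₂ ∈ Finset.Icc 1 (p^m),
        if Nat.gcd (a₁ * a₂) (p^m) = 1 ∧ Nat.gcd (a₁ + a₂) (p^m) = 1 then 1 else 0)
      = if Nat.gcd a₁ (p^m) = 1 then
          (∑ a₂ ∈ (Finset.Icc 1 (p^m)).filter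
            (fun a₂ => Nat.gcd a₂ (p^m) = 1 ∧ Nat.gcd (a₁+a₂) (p^m) = 1), (1:ℕ)) else 0 := by
    intro a₁ _
    by_cases h : Nat.gcd a₁ (p^m) = 1
    · rw [if_pos h, Finset.sum_filter]
      apply Finset.sum_congr rfl
      intro a₂ _
      apply if_congr _ rfl rfl
      rw [show (Nat.gcd (a₁ * a₂) (p^m) = 1) ↔ (Nat.gcd a₁ (p^m) = 1 ∧ Nat.gcd a₂ (p^m) = 1)
        from Nat.coprime_mul_iff_left]
      tauto
    · rw [if_neg h]
      apply Finset.sum_eq_zero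
      intro a₂ _
      rw [if_neg]
      intro hc
      exact h (Nat.coprime_mul_iff_left.mp hc.1).1
  rw [Finset.sum_congr rfl hstep, ← Finset.sum_filter]
  have hinner : ∀ a₁ ∈ (Finset.Icc 1 (p^m)).filter (fun a => Nat.gcd a (p^m) = 1),
      (∑ a₂ ∈ (Finset.Icc 1 (p^m)).filter
        (fun a₂ => Nat.gcd a₂ (p^m) = 1 ∧ Nat.gcd (a₁+a₂) (p^m) = 1), (1:ℕ))
      = p^(m-1) * (p-2) := by
    intro a₁ ha₁
    simp only [Finset.mem_filter, Finset.mem_Icc] at ha₁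
    rw [aux_inner p m hp hm h1 a₁ ha₁.1.1 (fun _ => (1:ℕ)) (fun _ => (1:ℕ))
      (fun _ _ _ => rfl)]
    rw [Finset.sum_const, smul_eq_mul, mul_one]
    apply aux_count0 p m hp hm h1
    rw [← aux_isUnit_iff p m hp hm h1]
    have : ((a₁ : ℕ) : ZMod (p^m)) = (a₁ : ZMod (p^m)) := rfl
    exact (ZMod.isUnit_iff_coprime a₁ (p^m)).mpr ha₁.2
  rw [Finset.sum_congr rfl hinner, Finset.sum_const, smul_eq_mul]
  congr 1
  have := aux_sum_Icc p m hp hm h1 (M := ℕ) (F := fun _ => 1)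
  rw [Finset.sum_const, Finset.sum_const, smul_eq_mul, mul_one, smul_eq_mul, mul_one] at this
  rw [this, aux_card_units p m hp hm h1]

/-- For a Dirichlet character `χ` mod `p^m` with conductor `p^t` and `0 ≤ r ≤ m`,
the sum `∑ gcd(a₁+a₂-1, p^r) χ(a₁)` over units `a₁, a₂` mod `p^m` with `a₁+a₂`
a unit equals `(r+1) φ₂(p^m)` if `t = 0`, `-r φ(p^{2m-1})` if `t = 1`, and `0`
if `t ≥ 2`. -/
theorem char_gcd_sum (p m t r : ℕ) (hp : p.Prime) (hm : 1 ≤ m) (htm : t ≤ m)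
    (hrm : r ≤ m) (χ : DirichletCharacter ℂ (p ^ m)) (hχ : χ.conductor = p ^ t) :
    ∑ a₁ ∈ (Finset.Icc 1 (p ^ m)).filter (fun a => Nat.gcd a (p ^ m) = 1),
      ∑ a₂ ∈ (Finset.Icc 1 (p ^ m)).filter
          (fun a₂ => Nat.gcd a₂ (p ^ m) = 1 ∧ Nat.gcd (a₁ + a₂) (p ^ m) = 1),
        (Nat.gcd (a₁ + a₂ - 1) (p ^ r) : ℂ) * χ (a₁ : ZMod (p ^ m))
      = if t = 0 then ((r : ℂ) + 1) * (phi2 (p ^ m) : ℂ)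
        else if t = 1 then -(r : ℂ) * ((p ^ (2 * m - 1)).totient : ℂ)
        else 0 := by
  haveI : NeZero (p^m) := ⟨pow_ne_zero m hp.ne_zero⟩
  haveI : NeZero p := ⟨hp.ne_zero⟩
  haveI : Fact p.Prime := ⟨hp⟩
  have h2le := hp.two_le
  have h1 : p ∣ p^m := dvd_pow_self p (by omega)
  -- Step 1: convert to ZMod sums
  have step1 : (∑ a₁ ∈ (Finset.Icc 1 (p ^ m)).filter (fun a => Nat.gcd a (p ^ m) = 1),
      ∑ a₂ ∈ (Finset.Icc 1 (p ^ m)).filter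
          (fun a₂ => Nat.gcd a₂ (p ^ m) = 1 ∧ Nat.gcd (a₁ + a₂) (p ^ m) = 1),
        (Nat.gcd (a₁ + a₂ - 1) (p ^ r) : ℂ) * χ (a₁ : ZMod (p ^ m)))
      = ∑ z₁ ∈ Finset.univ.filter
          (fun z₁ : ZMod (p^m) => ZMod.castHom h1 (ZMod p) z₁ ≠ 0),
          ∑ z₂ ∈ Finset.univ.filter (fun z₂ : ZMod (p^m) =>
            ZMod.castHom h1 (ZMod p) z₂ ≠ 0
              ∧ ZMod.castHom h1 (ZMod p) (z₁ + z₂) ≠ 0),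
            (Nat.gcd ((z₁ + z₂ - 1).val) (p^r) : ℂ) * χ z₁ := by
    rw [← aux_sum_Icc p m hp hm h1 (F := fun z₁ : ZMod (p^m) =>
      ∑ z₂ ∈ Finset.univ.filter (fun z₂ : ZMod (p^m) =>
            ZMod.castHom h1 (ZMod p) z₂ ≠ 0
              ∧ ZMod.castHom h1 (ZMod p) (z₁ + z₂) ≠ 0),
        (Nat.gcd ((z₁ + z₂ - 1).val) (p^r) : ℂ) * χ z₁)]
    apply Finset.sum_congr rfl
    intro a₁ ha₁
    simp only [Finset.mem_filter, Finset.mem_Icc] at ha₁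
    exact aux_inner p m hp hm h1 a₁ ha₁.1.1
      (fun a₂ => (Nat.gcd (a₁ + a₂ - 1) (p ^ r) : ℂ) * χ (a₁ : ZMod (p ^ m)))
      (fun z₂ => (Nat.gcd (((a₁ : ZMod (p^m)) + z₂ - 1).val) (p^r) : ℂ)
        * χ (a₁ : ZMod (p ^ m)))
      (fun a₂ h1' h2' => by
        beta_reduce
        rw [aux_gcd_val p m r hp hm hrm a₁ a₂ ha₁.1.1 h1'])
  rw [step1]
  -- Step 2: expand the gcd weight and swap sums
  have step2 : (∑ z₁ ∈ Finset.univ.filter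
          (fun z₁ : ZMod (p^m) => ZMod.castHom h1 (ZMod p) z₁ ≠ 0),
          ∑ z₂ ∈ Finset.univ.filter (fun z₂ : ZMod (p^m) =>
            ZMod.castHom h1 (ZMod p) z₂ ≠ 0
              ∧ ZMod.castHom h1 (ZMod p) (z₁ + z₂) ≠ 0),
            (Nat.gcd ((z₁ + z₂ - 1).val) (p^r) : ℂ) * χ z₁)
      = ∑ k ∈ Finset.range (r+1), ((p^k).totient : ℂ) *
          ∑ z₁ ∈ Finset.univ.filter
            (fun z₁ : ZMod (p^m) => ZMod.castHom h1 (ZMod p) z₁ ≠ 0),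
            (((Finset.univ.filter (fun z₂ : ZMod (p^m) =>
              (ZMod.castHom h1 (ZMod p) z₂ ≠ 0
                ∧ ZMod.castHom h1 (ZMod p) (z₁ + z₂) ≠ 0)
                ∧ p^k ∣ (z₁ + z₂ - 1).val)).card : ℂ) * χ z₁) := by
    rw [Finset.sum_congr rfl (fun z₁ _ => ?_), Finset.sum_comm]
    · apply Finset.sum_congr rfl
      intro k _
      rw [Finset.mul_sum]
    · -- per z₁ : expand gcd and swap z₂ with k
      calc ∑ z₂ ∈ Finset.univ.filter (fun z₂ : ZMod (p^m) =>
            ZMod.castHom h1 (ZMod p) z₂ ≠ 0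
              ∧ ZMod.castHom h1 (ZMod p) (z₁ + z₂) ≠ 0),
            (Nat.gcd ((z₁ + z₂ - 1).val) (p^r) : ℂ) * χ z₁
          = ∑ z₂ ∈ Finset.univ.filter (fun z₂ : ZMod (p^m) =>
            ZMod.castHom h1 (ZMod p) z₂ ≠ 0
              ∧ ZMod.castHom h1 (ZMod p) (z₁ + z₂) ≠ 0),
            ∑ k ∈ Finset.range (r+1),
              (if p^k ∣ (z₁ + z₂ - 1).val then ((p^k).totient : ℂ) else 0) * χ z₁ := by
            apply Finset.sum_congr rfl
            intro z₂ _
            rw [aux_gcd_eq_sum p hp r ((z₁ + z₂ - 1).val), Nat.cast_sum, Finset.sum_mul]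
            apply Finset.sum_congr rfl
            intro k _
            rw [apply_ite (Nat.cast : ℕ → ℂ), Nat.cast_zero]
        _ = ∑ k ∈ Finset.range (r+1), ∑ z₂ ∈ Finset.univ.filter (fun z₂ : ZMod (p^m) =>
            ZMod.castHom h1 (ZMod p) z₂ ≠ 0
              ∧ ZMod.castHom h1 (ZMod p) (z₁ + z₂) ≠ 0),
              (if p^k ∣ (z₁ + z₂ - 1).val then ((p^k).totient : ℂ) else 0) * χ z₁ :=
            Finset.sum_comm
        _ = ∑ k ∈ Finset.range (r+1), ((p^k).totient : ℂ) *
            (((Finset.univ.filter (fun z₂ : ZMod (p^m) =>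
              (ZMod.castHom h1 (ZMod p) z₂ ≠ 0
                ∧ ZMod.castHom h1 (ZMod p) (z₁ + z₂) ≠ 0)
                ∧ p^k ∣ (z₁ + z₂ - 1).val)).card : ℂ) * χ z₁) := by
            apply Finset.sum_congr rfl
            intro k _
            rw [Finset.sum_congr rfl (fun z₂ _ => by rw [ite_mul, zero_mul]),
              ← Finset.sum_filter, Finset.sum_const, Finset.filter_filter, nsmul_eq_mul]
            ring
  rw [step2]
  -- notation for the two character sums
  -- evaluate the k = 0 term
  have hk0 : (∑ z₁ ∈ Finset.univ.filter
            (fun z₁ : ZMod (p^m) => ZMod.castHom h1 (ZMod p) z₁ ≠ 0),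
            (((Finset.univ.filter (fun z₂ : ZMod (p^m) =>
              (ZMod.castHom h1 (ZMod p) z₂ ≠ 0
                ∧ ZMod.castHom h1 (ZMod p) (z₁ + z₂) ≠ 0)
                ∧ p^0 ∣ (z₁ + z₂ - 1).val)).card : ℂ) * χ z₁))
      = ((p^(m-1) * (p-2) : ℕ) : ℂ) *
          ∑ z₁ ∈ Finset.univ.filter
            (fun z₁ : ZMod (p^m) => ZMod.castHom h1 (ZMod p) z₁ ≠ 0), χ z₁ := by
    rw [Finset.mul_sum]
    apply Finset.sum_congr rfl
    intro z₁ hz₁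
    simp only [Finset.mem_filter, Finset.mem_univ, true_and] at hz₁
    have hfilter : (Finset.univ.filter (fun z₂ : ZMod (p^m) =>
              (ZMod.castHom h1 (ZMod p) z₂ ≠ 0
                ∧ ZMod.castHom h1 (ZMod p) (z₁ + z₂) ≠ 0)
                ∧ p^0 ∣ (z₁ + z₂ - 1).val))
        = (Finset.univ.filter (fun z₂ : ZMod (p^m) =>
              ZMod.castHom h1 (ZMod p) z₂ ≠ 0
                ∧ ZMod.castHom h1 (ZMod p) (z₁ + z₂) ≠ 0)) :=
      Finset.filter_congr (fun z₂ _ =>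
        ⟨fun hx => hx.1, fun hx => ⟨hx, by rw [pow_zero]; exact one_dvd _⟩⟩)
    rw [hfilter, aux_count0 p m hp hm h1 z₁ hz₁]
  -- evaluate the k ≥ 1 terms
  have hkpos : ∀ k, 1 ≤ k → k ≤ m →
      (∑ z₁ ∈ Finset.univ.filter
            (fun z₁ : ZMod (p^m) => ZMod.castHom h1 (ZMod p) z₁ ≠ 0),
            (((Finset.univ.filter (fun z₂ : ZMod (p^m) =>
              (ZMod.castHom h1 (ZMod p) z₂ ≠ 0
                ∧ ZMod.castHom h1 (ZMod p) (z₁ + z₂) ≠ 0)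
                ∧ p^k ∣ (z₁ + z₂ - 1).val)).card : ℂ) * χ z₁))
      = ((p^(m-k) : ℕ) : ℂ) *
          ((∑ z₁ ∈ Finset.univ.filter
            (fun z₁ : ZMod (p^m) => ZMod.castHom h1 (ZMod p) z₁ ≠ 0), χ z₁)
          - ∑ z₁ ∈ Finset.univ.filter
            (fun z₁ : ZMod (p^m) => ZMod.castHom h1 (ZMod p) z₁ = 1), χ z₁) := by
    intro k hk1 hkm
    have hsummand : ∀ z₁ ∈ Finset.univ.filter
            (fun z₁ : ZMod (p^m) => ZMod.castHom h1 (ZMod p) z₁ ≠ 0),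
        (((Finset.univ.filter (fun z₂ : ZMod (p^m) =>
              (ZMod.castHom h1 (ZMod p) z₂ ≠ 0
                ∧ ZMod.castHom h1 (ZMod p) (z₁ + z₂) ≠ 0)
                ∧ p^k ∣ (z₁ + z₂ - 1).val)).card : ℂ) * χ z₁)
          = (if ZMod.castHom h1 (ZMod p) z₁ = 1 then 0 else ((p^(m-k) : ℕ):ℂ)) * χ z₁ := by
      intro z₁ _
      rw [aux_countk p m k hp hm hk1 hkm h1 z₁, apply_ite (Nat.cast : ℕ → ℂ), Nat.cast_zero]
    rw [Finset.sum_congr rfl hsummand]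
    rw [← Finset.sum_filter_add_sum_filter_not (Finset.univ.filter
        (fun z₁ : ZMod (p^m) => ZMod.castHom h1 (ZMod p) z₁ ≠ 0))
      (fun z₁ => ZMod.castHom h1 (ZMod p) z₁ = 1)]
    have hzero : ∑ z₁ ∈ (Finset.univ.filter
        (fun z₁ : ZMod (p^m) => ZMod.castHom h1 (ZMod p) z₁ ≠ 0)).filter
          (fun z₁ => ZMod.castHom h1 (ZMod p) z₁ = 1),
        (if ZMod.castHom h1 (ZMod p) z₁ = 1 then 0 else ((p^(m-k) : ℕ):ℂ)) * χ z₁ = 0 := by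
      apply Finset.sum_eq_zero
      intro z₁ hz₁
      simp only [Finset.mem_filter] at hz₁
      rw [if_pos hz₁.2, zero_mul]
    have hrest : ∑ z₁ ∈ (Finset.univ.filter
        (fun z₁ : ZMod (p^m) => ZMod.castHom h1 (ZMod p) z₁ ≠ 0)).filter
          (fun z₁ => ¬ ZMod.castHom h1 (ZMod p) z₁ = 1),
        (if ZMod.castHom h1 (ZMod p) z₁ = 1 then 0 else ((p^(m-k) : ℕ):ℂ)) * χ z₁
        = ((p^(m-k) : ℕ):ℂ) * ∑ z₁ ∈ (Finset.univ.filter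
        (fun z₁ : ZMod (p^m) => ZMod.castHom h1 (ZMod p) z₁ ≠ 0)).filter
          (fun z₁ => ¬ ZMod.castHom h1 (ZMod p) z₁ = 1), χ z₁ := by
      rw [Finset.mul_sum]
      apply Finset.sum_congr rfl
      intro z₁ hz₁
      simp only [Finset.mem_filter] at hz₁
      rw [if_neg hz₁.2]
    rw [hzero, hrest, zero_add]
    congr 1
    -- remaining: sum over π ≠ 0 ∧ π ≠ 1 equals Σall - Σ1
    have hsplit := Finset.sum_filter_add_sum_filter_not (Finset.univ.filter
        (fun z₁ : ZMod (p^m) => ZMod.castHom h1 (ZMod p) z₁ ≠ 0))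
      (fun z₁ => ZMod.castHom h1 (ZMod p) z₁ = 1) (fun z₁ => χ z₁)
    have hker : (Finset.univ.filter
        (fun z₁ : ZMod (p^m) => ZMod.castHom h1 (ZMod p) z₁ ≠ 0)).filter
          (fun z₁ => ZMod.castHom h1 (ZMod p) z₁ = 1)
        = Finset.univ.filter
            (fun z₁ : ZMod (p^m) => ZMod.castHom h1 (ZMod p) z₁ = 1) := by
      rw [Finset.filter_filter]
      exact Finset.filter_congr (fun z₁ _ =>
        ⟨fun hx => hx.2, fun hx => ⟨hx ▸ one_ne_zero, hx⟩⟩)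
    rw [hker] at hsplit
    linear_combination hsplit
  -- assemble the k-sum
  rw [Finset.sum_range_succ']
  have hfirst : ((p^0).totient : ℂ) = 1 := by norm_num
  rw [hk0, hfirst, one_mul]
  have hterms : ∀ k ∈ Finset.range r,
      ((p^(k+1)).totient : ℂ) *
        (∑ z₁ ∈ Finset.univ.filter
            (fun z₁ : ZMod (p^m) => ZMod.castHom h1 (ZMod p) z₁ ≠ 0),
            (((Finset.univ.filter (fun z₂ : ZMod (p^m) =>
              (ZMod.castHom h1 (ZMod p) z₂ ≠ 0
                ∧ ZMod.castHom h1 (ZMod p) (z₁ + z₂) ≠ 0)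
                ∧ p^(k+1) ∣ (z₁ + z₂ - 1).val)).card : ℂ) * χ z₁))
      = ((p^(m-1) * (p-1) : ℕ) : ℂ) *
          ((∑ z₁ ∈ Finset.univ.filter
            (fun z₁ : ZMod (p^m) => ZMod.castHom h1 (ZMod p) z₁ ≠ 0), χ z₁)
          - ∑ z₁ ∈ Finset.univ.filter
            (fun z₁ : ZMod (p^m) => ZMod.castHom h1 (ZMod p) z₁ = 1), χ z₁) := by
    intro k hk
    simp only [Finset.mem_range] at hk
    have hnat : (p^(k+1)).totient * p^(m-(k+1)) = p^(m-1)*(p-1) := by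
      rw [Nat.totient_prime_pow hp (Nat.succ_pos k)]
      rw [show k+1-1 = k from rfl]
      calc p^k*(p-1)*p^(m-(k+1)) = (p^k * p^(m-(k+1))) * (p-1) := by ring
        _ = p^(m-1)*(p-1) := by
            rw [← pow_add]
            congr 2
            omega
    rw [hkpos (k+1) (by omega) (by omega), ← mul_assoc, ← Nat.cast_mul, hnat]
  rw [Finset.sum_congr rfl hterms, Finset.sum_const, Finset.card_range, nsmul_eq_mul]
  -- now case on t
  set Sall := ∑ z₁ ∈ Finset.univ.filter
      (fun z₁ : ZMod (p^m) => ZMod.castHom h1 (ZMod p) z₁ ≠ 0), χ z₁ with hSall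
  set S1 := ∑ z₁ ∈ Finset.univ.filter
      (fun z₁ : ZMod (p^m) => ZMod.castHom h1 (ZMod p) z₁ = 1), χ z₁ with hS1
  have hcast1 : ((p - 1 : ℕ) : ℂ) = (p : ℂ) - 1 := by
    rw [Nat.cast_sub (by omega)]; norm_num
  have hcast2 : ((p - 2 : ℕ) : ℂ) = (p : ℂ) - 2 := by
    rw [Nat.cast_sub (by omega)]; norm_num
  by_cases ht0 : t = 0
  · subst ht0
    rw [if_pos rfl]
    have hone : χ = 1 := by
      rw [DirichletCharacter.eq_one_iff_conductor_eq_one, hχ, pow_zero]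
    have hSall' : Sall = ((p^(m-1) * (p-1) : ℕ) : ℂ) := by
      rw [hSall, hone]; exact aux_sum_units_one p m hp hm h1
    have hS1' : S1 = ((p^(m-1) : ℕ) : ℂ) := by
      rw [hS1]
      exact aux_sum_ker_one p m hp hm h1 χ
        (aux_ft_mono (p^m) 1 p χ (one_dvd p) h1
          ((DirichletCharacter.factorsThrough_one_iff χ).mpr hone))
    rw [hSall', hS1', aux_phi2 p m hp hm h1]
    push_cast [hcast1, hcast2]
    ring
  · by_cases ht1 : t = 1
    · subst ht1
      rw [if_neg ht0, if_pos rfl]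
      have hne : χ ≠ 1 := by
        intro hc
        have := DirichletCharacter.conductor_one (R := ℂ) (n := p^m)
        rw [← hc] at this
        rw [hχ, pow_one] at this
        omega
      have hSall' : Sall = 0 := by
        rw [hSall]; exact aux_sum_units_ne p m hp hm h1 χ hne
      have hS1' : S1 = ((p^(m-1) : ℕ) : ℂ) := by
        rw [hS1]
        refine aux_sum_ker_one p m hp hm h1 χ
          (aux_ft_mono (p^m) (χ.conductor) p χ (by rw [hχ, pow_one]) h1
            (DirichletCharacter.factorsThrough_conductor χ))
      rw [hSall', hS1']
      rw [Nat.totient_prime_pow hp (show 0 < 2*m-1 by omega)]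
      have hpow : ((p : ℂ))^(m-1) * ((p : ℂ))^(m-1) = ((p: ℂ))^(2*m-1-1) := by
        rw [← pow_add]; congr 1; omega
      push_cast [hcast1]
      linear_combination (-(r : ℂ)) * ((p:ℂ) - 1) * hpow
    · rw [if_neg ht0, if_neg ht1]
      have ht2 : 2 ≤ t := by omega
      have hne : χ ≠ 1 := by
        intro hc
        have := DirichletCharacter.conductor_one (R := ℂ) (n := p^m)
        rw [← hc, hχ] at this
        have hp1 : p = 1 := (pow_eq_one_iff.mp this).resolve_right (by omega : t ≠ 0)
        omega
      have hSall' : Sall = 0 := by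
        rw [hSall]; exact aux_sum_units_ne p m hp hm h1 χ hne
      have hS1' : S1 = 0 := by
        rw [hS1]
        apply aux_sum_ker_zero p m hp hm h1 χ
        intro hf
        have hle : χ.conductor ≤ p := Nat.sInf_le
          ((DirichletCharacter.mem_conductorSet_iff χ).mpr hf)
        rw [hχ] at hle
        have hA : p^2 ≤ p^t := Nat.pow_le_pow_right (by omega) ht2
        have hC : p^2 = p * p := sq p
        have hD : 2*p ≤ p*p := Nat.mul_le_mul_right p h2le
        omega
      rw [hSall', hS1']
      ring
end
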